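/- arXiv:2311.16731 — 5 statements merged into one kernel-verified Lean document; each statement's English description precedes it below -/
import Mathlib

section
/- (Slope sufficient condition for Hölder metric regularity) Let X and Y be complete metric spaces, F : X ⇒ Y with closed graph, (x̄,ȳ) ∈ gph F, and q ∈ (0,1]. Suppose there exist τ > 0, δ > 0, μ > 0, γ > 0 such that for all x ∈ B_{δ+μ}(x̄), y ∈ B_δ(ȳ) with x ∉ F⁻¹(y), and all z ∈ F(x) with d(y,z) < (τμ)^{1/q}, one has limsup over (u,v) ∈ gph F with (u,v) → (x,z), (u,v) ≠ (x,z), d(u,x̄) < δ+μ, d(v,y) < (τμ)^{1/q} of (d(z,y)^q − d(v,y)^q)/d_γ((u,v),(x,z)) ≥ τ. Then F is metrically regular of order q at (x̄,ȳ): τ·d(x,F⁻¹(y)) ≤ d(y,F(x))^q for all x ∈ B_δ(x̄), y ∈ B_δ(ȳ) with d(y,F(x))^q < τμ. -/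
/-
Suppose `x` has no point of `F⁻¹(y)` nearby. Starting from `(x, z)`, `z ∈ F x` almost closest to
`y`, apply Ekeland's principle with a constant `κ < τ` to `p ↦ d(p.2, y)^q` on the closed graph of
`F`, metrised by `d_γ`. The Ekeland point `(u, v)` stays in the region where the slope condition
applies, while its minimality bounds the limsup there by `κ < τ`; hence `u ∈ F⁻¹(y)`, and the
descent inequality gives `κ d(x, u) ≤ d(y, z)^q`. Let `κ → τ` and `z` range over `F x`.
-/

open Metric EMetric ENNReal Set Filter Topology

noncomputable section

/-- The inverse of a set-valued mapping. -/
def SVInv {X Y : Type*} (F : X → Set Y) : Y → Set X := fun y => {x | y ∈ F x}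

/-- The graph of a set-valued mapping. -/
def SVGraph {X Y : Type*} (F : X → Set Y) : Set (X × Y) := {p | p.2 ∈ F p.1}

/-- The parametric (maximum) distance `d_γ` on a product of metric spaces. -/
def pdist {X Y : Type*} [MetricSpace X] [MetricSpace Y] (γ : ℝ) (p p' : X × Y) : ℝ :=
  max (dist p.1 p'.1) (γ * dist p.2 p'.2)

section Ekeland

variable {α : Type*} [MetricSpace α] {f : α → ℝ} {κ : ℝ}

def ekelandSet (f : α → ℝ) (κ : ℝ) (p : α) : Set α := {w | f w + κ * dist w p ≤ f p}

lemma self_mem_ekelandSet (p : α) : p ∈ ekelandSet f κ p := by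
  simp [ekelandSet]

lemma ekelandSet_subset (hκ : 0 ≤ κ) {p w : α} (hw : w ∈ ekelandSet f κ p) :
    ekelandSet f κ w ⊆ ekelandSet f κ p := fun v (hv : f v + κ * dist v w ≤ f w) => by
  have hw : f w + κ * dist w p ≤ f p := hw
  have := mul_le_mul_of_nonneg_left (dist_triangle v w p) hκ
  show f v + κ * dist v p ≤ f p
  linarith

lemma isClosed_ekelandSet (hf : LowerSemicontinuous f) (p : α) :
    IsClosed (ekelandSet f κ p) :=
  (hf.add (continuous_const.mul (continuous_id.dist continuous_const)).lowerSemicontinuous)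
    |>.isClosed_preimage (f p)

lemma exists_ekelandSet_subset_closedBall (hκ : 0 < κ) (hbdd : BddBelow (range f)) (p : α)
    {r : ℝ} (hr : 0 < r) :
    ∃ p' ∈ ekelandSet f κ p, ekelandSet f κ p' ⊆ Metric.closedBall p' r := by
  have hne : (f '' ekelandSet f κ p).Nonempty := ⟨f p, p, self_mem_ekelandSet p, rfl⟩
  have hbdd_p : BddBelow (f '' ekelandSet f κ p) := hbdd.mono (image_subset_range _ _)
  -- `p'` minimises `f` on `ekelandSet f κ p` up to `κ * r`
  obtain ⟨_, ⟨p', hp', rfl⟩, hlt⟩ :=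
    exists_lt_of_csInf_lt hne (lt_add_of_pos_right _ (mul_pos hκ hr))
  refine ⟨p', hp', fun w hw => ?_⟩
  have hinf : sInf (f '' ekelandSet f κ p) ≤ f w :=
    csInf_le hbdd_p (mem_image_of_mem f (ekelandSet_subset hκ.le hp' hw))
  have hw' : f w + κ * dist w p' ≤ f p' := hw
  rw [Metric.mem_closedBall, ← mul_le_mul_iff_right₀ hκ]
  linarith

/-- Ekeland's variational principle: the Ekeland sets of a sequence of near-minimisers are nested
closed sets shrinking to a point. -/
theorem exists_ekeland_point [CompleteSpace α] (hf : LowerSemicontinuous f)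
    (hbdd : BddBelow (range f)) (hκ : 0 < κ) (p₀ : α) :
    ∃ p, f p + κ * dist p p₀ ≤ f p₀ ∧ ∀ w, w ≠ p → f p < f w + κ * dist w p := by
  choose! next hnext_mem hnext_ball using fun (n : ℕ) p =>
    exists_ekelandSet_subset_closedBall hκ hbdd p (r := 1 / ((n : ℝ) + 1)) (by positivity)
  let seq : ℕ → α := fun n => Nat.rec p₀ (fun n p => next n p) n
  have hlim : Tendsto (fun n : ℕ => 2 * (1 / ((n : ℝ) + 1))) atTop (𝓝 0) := by
    simpa using (tendsto_one_div_add_atTop_nhds_zero_nat (𝕜 := ℝ)).const_mul 2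
  let T : ℕ → Set α := fun n => ekelandSet f κ (seq (n + 1))
  have hT_anti : Antitone fun n => ekelandSet f κ (seq n) :=
    antitone_nat_of_succ_le fun n => ekelandSet_subset hκ.le (hnext_mem n _)
  have hT_ball (n : ℕ) : T n ⊆ Metric.closedBall (seq (n + 1)) (1 / ((n : ℝ) + 1)) :=
    hnext_ball n _
  obtain ⟨p, hp⟩ : (⋂ n, T n).Nonempty := by
    refine nonempty_iInter_of_nonempty_biInter (fun n => isClosed_ekelandSet hf _)
      (fun n => isBounded_closedBall.subset (hT_ball n))
      (fun N => ⟨seq (N + 1), mem_iInter₂.2 fun n hn =>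
        hT_anti (Nat.succ_le_succ hn) (self_mem_ekelandSet _)⟩) ?_
    exact squeeze_zero (fun n => diam_nonneg) (fun n => (diam_mono (hT_ball n)
      isBounded_closedBall).trans (diam_closedBall (by positivity))) hlim
  rw [mem_iInter] at hp
  refine ⟨p, hT_anti (Nat.zero_le 1) (hp 0), fun w hne => ?_⟩
  by_contra! hw
  have hdist (n : ℕ) : dist w p ≤ 2 * (1 / ((n : ℝ) + 1)) := by
    have hwT : w ∈ T n := ekelandSet_subset hκ.le (hp n) hw
    linarith [dist_triangle_right w p (seq (n + 1)), Metric.mem_closedBall.1 (hT_ball n hwT),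
      Metric.mem_closedBall.1 (hT_ball n (hp n))]
  exact hne (dist_le_zero.1 (ge_of_tendsto' hlim hdist))

end Ekeland

section pdist

variable {X Y : Type*} [MetricSpace X] [MetricSpace Y] {γ : ℝ}

lemma pdist_comm (p p' : X × Y) : pdist γ p p' = pdist γ p' p := by
  simp [pdist, dist_comm]

lemma pdist_triangle (hγ : 0 ≤ γ) (p p' p'' : X × Y) :
    pdist γ p p'' ≤ pdist γ p p' + pdist γ p' p'' := by
  have h₂ := mul_le_mul_of_nonneg_left (dist_triangle p.2 p'.2 p''.2) hγ
  unfold pdist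
  refine max_le ?_ ?_
  · linarith [dist_triangle p.1 p'.1 p''.1, le_max_left (dist p.1 p'.1) (γ * dist p.2 p'.2),
      le_max_left (dist p'.1 p''.1) (γ * dist p'.2 p''.2)]
  · linarith [le_max_right (dist p.1 p'.1) (γ * dist p.2 p'.2),
      le_max_right (dist p'.1 p''.1) (γ * dist p'.2 p''.2)]

lemma eq_of_pdist_eq_zero (hγ : 0 < γ) {p p' : X × Y} (h : pdist γ p p' = 0) : p = p' := by
  have h₁ : dist p.1 p'.1 ≤ 0 := h ▸ le_max_left _ _
  have h₂ : γ * dist p.2 p'.2 ≤ 0 := h ▸ le_max_right _ _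
  exact Prod.ext (dist_le_zero.1 h₁) (dist_le_zero.1 (nonpos_of_mul_nonpos_right h₂ hγ))

lemma pdist_pos (hγ : 0 < γ) {p p' : X × Y} (h : p ≠ p') : 0 < pdist γ p p' :=
  (dist_nonneg.trans (le_max_left _ _)).lt_of_ne fun h' => h (eq_of_pdist_eq_zero hγ h'.symm)

lemma dist_le_max_mul_pdist (hγ : 0 < γ) (p p' : X × Y) :
    dist p p' ≤ max 1 γ⁻¹ * pdist γ p p' := by
  have h₁ : dist p.1 p'.1 ≤ pdist γ p p' := le_max_left _ _
  have h₂ : γ * dist p.2 p'.2 ≤ pdist γ p p' := le_max_right _ _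
  have hpd : 0 ≤ pdist γ p p' := dist_nonneg.trans h₁
  rw [Prod.dist_eq]
  refine max_le ?_ ?_
  · exact h₁.trans (le_mul_of_one_le_left hpd (le_max_left _ _))
  · calc dist p.2 p'.2 = γ⁻¹ * (γ * dist p.2 p'.2) := by field_simp
      _ ≤ max 1 γ⁻¹ * pdist γ p p' :=
        mul_le_mul (le_max_right _ _) h₂ (by positivity) (by positivity)

lemma pdist_le_max_mul_dist (p p' : X × Y) :
    pdist γ p p' ≤ max 1 γ * dist p p' := by
  have h₁ : dist p.1 p'.1 ≤ dist p p' := by rw [Prod.dist_eq]; exact le_max_left _ _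
  have h₂ : dist p.2 p'.2 ≤ dist p p' := by rw [Prod.dist_eq]; exact le_max_right _ _
  refine max_le ?_ ?_
  · exact h₁.trans (le_mul_of_one_le_left dist_nonneg (le_max_left _ _))
  · exact mul_le_mul (le_max_right _ _) h₂ dist_nonneg (by positivity)

end pdist

/-- A copy of `X × Y` carrying the metric `pdist γ` instead of the product metric. -/
def ParamProd (_γ : ℝ) (X Y : Type*) : Type _ := X × Y

namespace ParamProd

variable {γ : ℝ} {X Y : Type*} [MetricSpace X] [MetricSpace Y] [Fact (0 < γ)]

instance : MetricSpace (ParamProd γ X Y) where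
  dist := pdist γ
  dist_self p := by simp [pdist]
  dist_comm := pdist_comm
  dist_triangle := pdist_triangle (Fact.out : 0 < γ).le
  eq_of_dist_eq_zero := eq_of_pdist_eq_zero Fact.out

def uniformEquivProd : ParamProd γ X Y ≃ᵤ X × Y where
  toEquiv := Equiv.refl _
  uniformContinuous_toFun :=
    (LipschitzWith.of_dist_le' (dist_le_max_mul_pdist (X := X) (Y := Y) Fact.out)).uniformContinuous
  uniformContinuous_invFun :=
    (LipschitzWith.of_dist_le' (pdist_le_max_mul_dist (X := X) (Y := Y) (γ := γ))).uniformContinuous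

instance [CompleteSpace X] [CompleteSpace Y] : CompleteSpace (ParamProd γ X Y) :=
  uniformEquivProd.completeSpace_iff.2 inferInstance

end ParamProd

theorem exists_ekeland_point_pdist {X Y : Type*} [MetricSpace X] [MetricSpace Y]
    [CompleteSpace X] [CompleteSpace Y] {γ κ : ℝ} (hγ : 0 < γ) (hκ : 0 < κ)
    {S : Set (X × Y)} (hS : IsClosed S) {f : X × Y → ℝ} (hf : LowerSemicontinuous f)
    (hbdd : BddBelow (f '' S)) {p₀ : X × Y} (hp₀ : p₀ ∈ S) :
    ∃ p ∈ S, f p + κ * pdist γ p p₀ ≤ f p₀ ∧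
      ∀ w ∈ S, w ≠ p → f p < f w + κ * pdist γ w p := by
  have : Fact (0 < γ) := ⟨hγ⟩
  let e : ParamProd γ X Y ≃ᵤ X × Y := ParamProd.uniformEquivProd
  let T := e ⁻¹' S
  have : IsClosed T := hS.preimage e.continuous
  have hbddT : BddBelow (range fun w : T => f (e w)) :=
    hbdd.mono (by rintro _ ⟨w, rfl⟩; exact mem_image_of_mem f w.2)
  obtain ⟨⟨p, hp⟩, hle, hmin⟩ := exists_ekeland_point (α := T) (f := fun w => f (e w))
    (hf.comp (e.continuous.comp continuous_subtype_val)) hbddT hκ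
    ⟨e.symm p₀, by simpa [T] using hp₀⟩
  refine ⟨e p, hp, hle, fun w hw hne => hmin ⟨e.symm w, by simpa [T] using hw⟩ fun h => hne ?_⟩
  simpa using congrArg (fun v : T => e v) h

lemma infEDist_rpow_lt_iff {α : Type*} [PseudoEMetricSpace α] {x : α} {s : Set α} {q : ℝ}
    (hq : 0 < q) {c : ℝ≥0∞} : infEDist x s ^ q < c ↔ ∃ y ∈ s, edist x y ^ q < c := by
  simp_rw [← ENNReal.lt_rpow_inv_iff hq, infEDist_lt_iff]

section SlopeCondition

variable {X Y : Type*} [MetricSpace X] [MetricSpace Y]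

def SlopeCondition (F : X → Set Y) (xb : X) (yb : Y) (q τ δ μ γ : ℝ) : Prop :=
  ∀ x ∈ ball xb (δ + μ), ∀ y ∈ ball yb δ, x ∉ SVInv F y →
    ∀ z ∈ F x, dist y z < (τ * μ) ^ (1 / q) →
      (τ : EReal) ≤ Filter.limsup
        (fun p : X × Y =>
          (((dist z y ^ q - dist p.2 y ^ q) / pdist γ p (x, z) : ℝ) : EReal))
        (𝓝[(SVGraph F ∩ (ball xb (δ + μ) ×ˢ ball y ((τ * μ) ^ (1 / q)))) \ {(x, z)}]
          (x, z))

variable [CompleteSpace X] [CompleteSpace Y] {F : X → Set Y} {xb : X} {yb : Y}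
  {q τ δ μ γ : ℝ} {x : X} {y z : Y}

theorem exists_mem_svInv_of_slopeCondition (hcl : IsClosed (SVGraph F)) (hq : 0 < q)
    (hγ : 0 < γ) (hslope : SlopeCondition F xb yb q τ δ μ γ) {κ : ℝ} (hκ : 0 < κ) (hκτ : κ < τ)
    (hx : x ∈ ball xb δ) (hy : y ∈ ball yb δ) (hz : z ∈ F x) (hzκ : dist y z ^ q < κ * μ) :
    ∃ u ∈ SVInv F y, κ * dist x u ≤ dist y z ^ q := by
  set f : X × Y → ℝ := fun p => dist p.2 y ^ q
  have hf : Continuous f :=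
    (continuous_snd.dist continuous_const).rpow_const fun _ => Or.inr hq.le
  have hf_nonneg (p : X × Y) : 0 ≤ f p := Real.rpow_nonneg dist_nonneg q
  obtain ⟨⟨u, v⟩, hv, hdesc, hmin⟩ := exists_ekeland_point_pdist hγ hκ hcl
    hf.lowerSemicontinuous ⟨0, by rintro _ ⟨p, -, rfl⟩; exact hf_nonneg p⟩ (p₀ := (x, z)) hz
  have hfz : f (x, z) = dist y z ^ q := by simp only [f, dist_comm]
  have hpd : κ * pdist γ (u, v) (x, z) ≤ dist y z ^ q := by linarith [hf_nonneg (u, v)]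
  have hux : dist x u ≤ pdist γ (u, v) (x, z) := dist_comm x u ▸ le_max_left _ _
  refine ⟨u, ?_, (mul_le_mul_of_nonneg_left hux hκ.le).trans hpd⟩
  by_contra hu
  have hu_ball : u ∈ ball xb (δ + μ) := by
    have : pdist γ (u, v) (x, z) < μ := lt_of_mul_lt_mul_left (hpd.trans_lt hzκ) hκ.le
    rw [Metric.mem_ball] at hx ⊢
    linarith [dist_triangle u x xb, dist_comm x u]
  have hv_ball : dist y v < (τ * μ) ^ (1 / q) := by
    have hμ : 0 < μ := pos_of_mul_pos_right ((hf_nonneg (x, z)).trans_lt (hfz ▸ hzκ)) hκ.le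
    have hκμ : κ * μ < τ * μ := mul_lt_mul_of_pos_right hκτ hμ
    have hτμ : 0 ≤ τ * μ := (mul_pos (hκ.trans hκτ) hμ).le
    rw [one_div, Real.lt_rpow_inv_iff_of_pos dist_nonneg hτμ hq, dist_comm]
    linarith [mul_nonneg hκ.le (dist_nonneg.trans hux)]
  have hslope_le : limsup (fun p : X × Y =>
      (((dist v y ^ q - dist p.2 y ^ q) / pdist γ p (u, v) : ℝ) : EReal))
      (𝓝[(SVGraph F ∩ (ball xb (δ + μ) ×ˢ ball y ((τ * μ) ^ (1 / q)))) \ {(u, v)}] (u, v))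
      ≤ κ := by
    refine limsup_le_of_le (by isBoundedDefault) (eventually_nhdsWithin_of_forall ?_)
    rintro w ⟨⟨hw, -⟩, hne⟩
    have hpos : 0 < pdist γ w (u, v) := pdist_pos hγ hne
    rw [EReal.coe_le_coe_iff, div_le_iff₀ hpos]
    linarith [hmin w hw hne]
  have hτκ := (hslope u hu_ball y hy hu v hv hv_ball).trans hslope_le
  exact hκτ.not_ge (EReal.coe_le_coe_iff.1 hτκ)

theorem ofReal_mul_infEDist_svInv_le (hcl : IsClosed (SVGraph F)) (hq : 0 < q) (hμ : 0 < μ)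
    (hγ : 0 < γ) (hslope : SlopeCondition F xb yb q τ δ μ γ) (hx : x ∈ ball xb δ)
    (hy : y ∈ ball yb δ) (hz : z ∈ F x) (hzτ : dist y z ^ q < τ * μ) :
    ENNReal.ofReal τ * infEDist x (SVInv F y) ≤ ENNReal.ofReal (dist y z ^ q) := by
  refine ENNReal.mul_le_of_forall_lt fun a ha b hb => ?_
  have hzμ : dist y z ^ q / μ < τ := (div_lt_iff₀ hμ).2 hzτ
  obtain ⟨κ, hκ_gt, hκτ⟩ := exists_between (max_lt (ENNReal.toReal_lt_of_lt_ofReal ha) hzμ)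
  have hzκ : dist y z ^ q < κ * μ := (div_lt_iff₀ hμ).1 ((le_max_right _ _).trans_lt hκ_gt)
  have hκ0 : 0 < κ :=
    (div_nonneg (Real.rpow_nonneg dist_nonneg q) hμ.le).trans_lt ((le_max_right _ _).trans_lt hκ_gt)
  obtain ⟨u, hu, hxu⟩ :=
    exists_mem_svInv_of_slopeCondition hcl hq hγ hslope hκ0 hκτ hx hy hz hzκ
  have ha' : a ≤ ENNReal.ofReal κ :=
    (ENNReal.le_ofReal_iff_toReal_le ha.ne_top hκ0.le).2 ((le_max_left _ _).trans hκ_gt.le)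
  calc a * b ≤ ENNReal.ofReal κ * edist x u :=
        mul_le_mul' ha' (hb.le.trans (infEDist_le_edist_of_mem hu))
    _ = ENNReal.ofReal (κ * dist x u) := by rw [edist_dist, ENNReal.ofReal_mul hκ0.le]
    _ ≤ ENNReal.ofReal (dist y z ^ q) := ENNReal.ofReal_le_ofReal hxu

end SlopeCondition

theorem slope_sufficient_condition_holder_metric_regularity_general
    {X Y : Type*} [MetricSpace X] [MetricSpace Y] [CompleteSpace X] [CompleteSpace Y]
    (F : X → Set Y) (hcl : IsClosed (SVGraph F)) (xb : X) (yb : Y)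
    (q : ℝ) (hq0 : 0 < q)
    (τ δ μ γ : ℝ) (hμ : 0 < μ) (hγ : 0 < γ)
    (hslope : ∀ x ∈ ball xb (δ + μ), ∀ y ∈ ball yb δ, x ∉ SVInv F y →
      ∀ z ∈ F x, dist y z < (τ * μ) ^ (1 / q) →
        (τ : EReal) ≤ Filter.limsup
          (fun p : X × Y =>
            (((dist z y ^ q - dist p.2 y ^ q) / pdist γ p (x, z) : ℝ) : EReal))
          (𝓝[(SVGraph F ∩ (ball xb (δ + μ) ×ˢ ball y ((τ * μ) ^ (1 / q)))) \ {(x, z)}]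
            (x, z))) :
    ∀ x ∈ ball xb δ, ∀ y ∈ ball yb δ,
      infEdist y (F x) ^ q < ENNReal.ofReal (τ * μ) →
      ENNReal.ofReal τ * infEdist x (SVInv F y) ≤ infEdist y (F x) ^ q := by
  intro x hx y hy hlt
  refine le_of_forall_gt_imp_ge_of_dense fun c hc => ?_
  obtain ⟨z, hz, hzc⟩ := (infEDist_rpow_lt_iff hq0).1 (lt_min hc hlt)
  rw [edist_dist, ENNReal.ofReal_rpow_of_nonneg dist_nonneg hq0.le, lt_min_iff,
    ENNReal.ofReal_lt_ofReal_iff'] at hzc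
  exact (ofReal_mul_infEDist_svInv_le hcl hq0 hμ hγ hslope hx hy hz hzc.2.1).trans hzc.1.le

theorem slope_sufficient_condition_holder_metric_regularity
    {X Y : Type*} [MetricSpace X] [MetricSpace Y] [CompleteSpace X] [CompleteSpace Y]
    (F : X → Set Y) (hcl : IsClosed (SVGraph F)) (xb : X) (yb : Y) (hxy : yb ∈ F xb)
    (q : ℝ) (hq0 : 0 < q) (hq1 : q ≤ 1)
    (τ δ μ γ : ℝ) (hτ : 0 < τ) (hδ : 0 < δ) (hμ : 0 < μ) (hγ : 0 < γ)
    (hslope : ∀ x ∈ ball xb (δ + μ), ∀ y ∈ ball yb δ, x ∉ SVInv F y →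
      ∀ z ∈ F x, dist y z < (τ * μ) ^ (1 / q) →
        (τ : EReal) ≤ Filter.limsup
          (fun p : X × Y =>
            (((dist z y ^ q - dist p.2 y ^ q) / pdist γ p (x, z) : ℝ) : EReal))
          (𝓝[(SVGraph F ∩ (ball xb (δ + μ) ×ˢ ball y ((τ * μ) ^ (1 / q)))) \ {(x, z)}]
            (x, z))) :
    ∀ x ∈ ball xb δ, ∀ y ∈ ball yb δ,
      infEdist y (F x) ^ q < ENNReal.ofReal (τ * μ) →
      ENNReal.ofReal τ * infEdist x (SVInv F y) ≤ infEdist y (F x) ^ q :=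
  slope_sufficient_condition_holder_metric_regularity_general F hcl xb yb q hq0 τ δ μ γ hμ hγ hslope

end
end

section
/- (Hölder Lyusternik–Graves theorem) Let X be a complete metric space, Y a linear space with a shift-invariant metric, F : X ⇒ Y, (x̄,ȳ) ∈ gph F with gph F closed near (x̄,ȳ), f : X → Y with f(x̄) = 0, and q ∈ (0,1]. Then rg^q(F+f)(x̄,ȳ) ≥ rg^q F(x̄,ȳ) − lip^q f(x̄), with the convention (+∞) − (+∞) = 0. -/
open Metric EMetric ENNReal Set

noncomputable section

/-- The modulus of metric regularity of order `q` of `F` at `(xb, yb)`: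
the supremum of all (finite) `τ > 0` for which the regularity estimate holds on
some neighbourhood; `0` if the property fails. -/
def rgq {X Y : Type*} [MetricSpace X] [MetricSpace Y]
    (F : X → Set Y) (xb : X) (yb : Y) (q : ℝ) : ℝ≥0∞ :=
  sSup {τ : ℝ≥0∞ | 0 < τ ∧ τ ≠ ⊤ ∧ ∃ δ : ℝ, 0 < δ ∧ ∀ x ∈ ball xb δ, ∀ y ∈ ball yb δ,
    τ * infEdist x (SVInv F y) ≤ infEdist y (F x) ^ q}

/-- The modulus of Hölder continuity of order `q` of a single-valued mapping `f` at `xb`: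
the infimum of all (finite) `τ` with `d(f x, f x')^q ≤ τ d(x, x')` near `xb`;
`+∞` if no such `τ` exists. -/
def lipq {X Y : Type*} [MetricSpace X] [MetricSpace Y]
    (f : X → Y) (xb : X) (q : ℝ) : ℝ≥0∞ :=
  sInf {τ : ℝ≥0∞ | τ ≠ ⊤ ∧ ∃ δ : ℝ, 0 < δ ∧ ∀ x ∈ ball xb δ, ∀ x' ∈ ball xb δ,
    edist (f x) (f x') ^ q ≤ τ * edist x x'}

/-!
Fix a regularity constant `τ` of `F` and a Hölder constant `κ` of `f`, and let `κ + μ ≤ τ`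
(enlarging `κ` slightly, we may take `κ > 0`). To solve `y - f x ∈ F x` near `x₀`, iterate
`x (n+1) ∈ F⁻¹ (y - f (x n))`, chosen by the regularity of `F`. By the Hölder estimate the new
residual satisfies
`d(y - f (x (n+1)), F (x (n+1)))^q ≤ d(f (x n), f (x (n+1)))^q ≤ κ d(x n, x (n+1))`,
so residuals and steps decay geometrically with ratio `κ / (κ + μ)`. The limit exists by
completeness, solves the inclusion because the graph of `F` is closed, and lies within
`d(y - f x₀, F x₀)^q / μ` of `x₀`. Hence `μ` is a regularity constant of `F + f`, and letting
`μ ↑ τ - κ` gives `rg^q (F + f) ≥ τ - κ`.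
-/

open Filter Topology

theorem exists_seq_of_forall_exists_succ {α : Type*} {P : ℕ → α → Prop} {R : ℕ → α → α → Prop}
    {a : α} (h₀ : P 0 a) (hstep : ∀ n x, P n x → ∃ y, P (n + 1) y ∧ R n x y) :
    ∃ u : ℕ → α, u 0 = a ∧ ∀ n, P n (u n) ∧ R n (u n) (u (n + 1)) := by
  choose! next hnextP hnextR using hstep
  let u : ℕ → α := fun n => Nat.rec a (fun k x => next k x) n
  have hP : ∀ n, P n (u n) := fun n => by
    induction n with
    | zero => exact h₀
    | succ k ih => exact hnextP k _ ih
  exact ⟨u, rfl, fun n => ⟨hP n, hnextR n _ (hP n)⟩⟩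

theorem ENNReal.div_add_div_mul_div_of_ne {a b c : ℝ≥0∞} (ha0 : a ≠ 0) (ha : a ≠ ⊤) (hb : b ≠ ⊤) :
    c / (b + a) + b / (b + a) * (c / a) = c / a := by
  have hba0 : b + a ≠ 0 := by simp [ha0]
  have hba : b + a ≠ ⊤ := by simp [ha, hb]
  calc c / (b + a) + b / (b + a) * (c / a)
      = a / (b + a) * (c / a) + b / (b + a) * (c / a) := by
        congr 1
        calc c / (b + a) = c / (b + a) * (a / a) := by rw [ENNReal.div_self ha0 ha, mul_one]
          _ = a / (b + a) * (c / a) := by simp only [div_eq_mul_inv]; ring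
    _ = c / a := by
        rw [← add_mul, ENNReal.div_add_div_same, add_comm, ENNReal.div_self hba0 hba, one_mul]

theorem ENNReal.exists_pos_ofReal_lt_of_tendsto {φ : ℝ≥0∞ → ℝ≥0∞} (hφ : Tendsto φ (𝓝 0) (𝓝 0))
    {E : ℝ≥0∞} (hE : 0 < E) : ∃ δ > (0 : ℝ), φ (ENNReal.ofReal δ) < E := by
  have hofReal : Tendsto ENNReal.ofReal (𝓝[>] 0) (𝓝 0) := by
    simpa using (ENNReal.continuous_ofReal.tendsto 0).mono_left nhdsWithin_le_nhds
  obtain ⟨δ, hδφ, hδ⟩ :=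
    ((hφ.comp hofReal).eventually (gt_mem_nhds hE)).and self_mem_nhdsWithin |>.exists
  exact ⟨δ, hδ, hδφ⟩

theorem tendsto_comp_of_rpow_edist_le {X Y ι : Type*} [PseudoEMetricSpace X] [PseudoEMetricSpace Y]
    {g : X → Y} {u : ι → X} {l : Filter ι} {a : X} {q : ℝ} {κ : ℝ≥0∞} (hq : 0 < q) (hκ : κ ≠ ⊤)
    (hu : Tendsto u l (𝓝 a)) (hg : ∀ᶠ i in l, edist (g (u i)) (g a) ^ q ≤ κ * edist (u i) a) :
    Tendsto (g ∘ u) l (𝓝 (g a)) := by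
  rw [tendsto_iff_edist_tendsto_0] at hu ⊢
  have hbound : Tendsto (fun i => (κ * edist (u i) a) ^ q⁻¹) l (𝓝 0) := by
    have := ((ENNReal.continuous_rpow_const (y := q⁻¹)).tendsto 0).comp
      (by simpa using ENNReal.Tendsto.const_mul hu (Or.inr hκ))
    simpa [Function.comp_def, ENNReal.zero_rpow_of_pos (inv_pos.2 hq)] using this
  refine tendsto_of_tendsto_of_tendsto_of_le_of_le' tendsto_const_nhds hbound
    (Eventually.of_forall fun _ => zero_le) ?_
  filter_upwards [hg] with i hi
  exact (ENNReal.le_rpow_inv_iff hq).2 hi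

theorem exists_step_of_regular_of_holder
    {X Y : Type*} [PseudoEMetricSpace X] [PseudoEMetricSpace Y]
    {F : X → Set Y} {g : X → Y} {q : ℝ} {κ μ e R : ℝ≥0∞} {x₀ z : X}
    (hq : 0 < q) (hκ0 : κ ≠ 0) (hκ : κ ≠ ⊤) (hμ0 : μ ≠ 0) (hμ : μ ≠ ⊤)
    (hreg : ∀ x ∈ closedEBall x₀ R,
      (κ + μ) * infEDist x (SVInv F (g x)) ≤ infEDist (g x) (F x) ^ q)
    (hg : ∀ x ∈ closedEBall x₀ R, ∀ x' ∈ closedEBall x₀ R,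
      edist (g x) (g x') ^ q ≤ κ * edist x x')
    (hz : infEDist (g z) (F z) ^ q < e) (hzR : edist x₀ z + e / μ ≤ R) :
    ∃ z', g z ∈ F z' ∧ edist z z' < e / (κ + μ) ∧
      infEDist (g z') (F z') ^ q < κ / (κ + μ) * e ∧ edist x₀ z' + κ / (κ + μ) * e / μ ≤ R := by
  have hτ0 : κ + μ ≠ 0 := by simp [hμ0]
  have hzB : z ∈ closedEBall x₀ R := mem_closedEBall'.2 (le_self_add.trans hzR)
  have hlt : infEDist z (SVInv F (g z)) < e / (κ + μ) := by
    rw [ENNReal.lt_div_iff_mul_lt (Or.inl hτ0) (Or.inl (by finiteness)), mul_comm]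
    exact (hreg z hzB).trans_lt hz
  obtain ⟨z', hz'F, hzz'⟩ := infEDist_lt_iff.1 hlt
  have hz'R : edist x₀ z' + κ / (κ + μ) * e / μ ≤ R :=
    calc edist x₀ z' + κ / (κ + μ) * e / μ
        ≤ edist x₀ z + (e / (κ + μ) + κ / (κ + μ) * (e / μ)) := by
          rw [← add_assoc, mul_div_assoc]
          gcongr
          exact (edist_triangle _ _ _).trans (by gcongr)
      _ = edist x₀ z + e / μ := by rw [ENNReal.div_add_div_mul_div_of_ne hμ0 hμ hκ]
      _ ≤ R := hzR
  have hz'B : z' ∈ closedEBall x₀ R := mem_closedEBall'.2 (le_self_add.trans hz'R)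
  refine ⟨z', hz'F, hzz', ?_, hz'R⟩
  calc infEDist (g z') (F z') ^ q ≤ edist (g z) (g z') ^ q := by
        rw [edist_comm]; gcongr; exact infEDist_le_edist_of_mem hz'F
    _ ≤ κ * edist z z' := hg z hzB z' hz'B
    _ < κ * (e / (κ + μ)) := ENNReal.mul_lt_mul_right hκ0 hκ hzz'
    _ = κ / (κ + μ) * e := by rw [mul_div_assoc', ENNReal.mul_div_right_comm]

theorem exists_apply_mem_of_regular_of_holder
    {X Y : Type*} [PseudoEMetricSpace X] [CompleteSpace X] [PseudoEMetricSpace Y]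
    {F : X → Set Y} {g : X → Y} {C : Set (X × Y)} {q : ℝ} {κ μ c : ℝ≥0∞} {x₀ : X}
    (hq : 0 < q) (hκ0 : κ ≠ 0) (hκ : κ ≠ ⊤) (hμ0 : μ ≠ 0) (hμ : μ ≠ ⊤) (hc : c ≠ ⊤)
    (hC : IsClosed ({p : X × Y | p.2 ∈ F p.1} ∩ C))
    (hCmem : ∀ x ∈ closedEBall x₀ (c / μ), ∀ x' ∈ closedEBall x₀ (c / μ), (x', g x) ∈ C)
    (hreg : ∀ x ∈ closedEBall x₀ (c / μ),
      (κ + μ) * infEDist x (SVInv F (g x)) ≤ infEDist (g x) (F x) ^ q)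
    (hg : ∀ x ∈ closedEBall x₀ (c / μ), ∀ x' ∈ closedEBall x₀ (c / μ),
      edist (g x) (g x') ^ q ≤ κ * edist x x')
    (h₀ : infEDist (g x₀) (F x₀) ^ q < c) :
    ∃ z ∈ closedEBall x₀ (c / μ), g z ∈ F z := by
  set B := closedEBall x₀ (c / μ)
  set θ := κ / (κ + μ)
  have hθ : θ < 1 := by
    rw [ENNReal.div_lt_iff (Or.inl (by simp [hμ0])) (Or.inl (by finiteness)), one_mul]
    exact ENNReal.lt_add_right hκ hμ0
  -- after `n` steps the residual is below `θ ^ n * c`, and the remaining steps stay in `B`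
  let Q : ℕ → X → Prop := fun n z =>
    infEDist (g z) (F z) ^ q < θ ^ n * c ∧ edist x₀ z + θ ^ n * c / μ ≤ c / μ
  have hQB n z (hz : Q n z) : z ∈ B := mem_closedEBall'.2 (le_self_add.trans hz.2)
  have hstep n z (hz : Q n z) :
      ∃ z', Q (n + 1) z' ∧ g z ∈ F z' ∧ edist z z' ≤ c / (κ + μ) * θ ^ n := by
    obtain ⟨z', hz'F, hzz', hz'⟩ :=
      exists_step_of_regular_of_holder hq hκ0 hκ hμ0 hμ hreg hg hz.1 hz.2
    refine ⟨z', by simpa only [Q, pow_succ', mul_assoc] using hz', hz'F, ?_⟩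
    rw [mul_comm, ← mul_div_assoc]
    exact hzz'.le
  obtain ⟨u, rfl, hu⟩ := exists_seq_of_forall_exists_succ (a := x₀) (by simpa [Q] using h₀) hstep
  have huB n : u n ∈ B := hQB n _ (hu n).1
  obtain ⟨a, ha⟩ := cauchySeq_tendsto_of_complete <| cauchySeq_of_edist_le_geometric θ _ hθ
    (ENNReal.div_ne_top hc (by simp [hμ0])) fun n => (hu n).2.2
  have haB : a ∈ B := isClosed_closedEBall.mem_of_tendsto ha (Eventually.of_forall huB)
  have hga : Tendsto (g ∘ u) atTop (𝓝 (g a)) :=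
    tendsto_comp_of_rpow_edist_le hq hκ ha (Eventually.of_forall fun n => hg _ (huB n) a haB)
  have hlim : (a, g a) ∈ {p : X × Y | p.2 ∈ F p.1} ∩ C :=
    hC.mem_of_tendsto ((ha.comp (tendsto_add_atTop_nat 1)).prodMk_nhds hga)
      (Eventually.of_forall fun n => ⟨(hu n).2.1, hCmem _ (huB n) _ (huB (n + 1))⟩)
  exact ⟨a, haB, hlim.1⟩

section ShiftInvariant

variable {Y : Type*} [AddCommGroup Y] [PseudoMetricSpace Y]

theorem isometry_add_right_of_shift (hshift : ∀ a b c : Y, dist (a + c) (b + c) = dist a b)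
    (c : Y) :
    Isometry (· + c) :=
  Isometry.of_dist_eq fun a b => hshift a b c

theorem edist_sub_sub_left_of_shift (hshift : ∀ a b c : Y, dist (a + c) (b + c) = dist a b)
    (y a b : Y) :
    edist (y - a) (y - b) = edist a b := by
  rw [← (isometry_add_right_of_shift hshift (a + b - y)).edist_eq, edist_comm]
  congr 1 <;> abel

theorem infEDist_image_add_right_of_shift (hshift : ∀ a b c : Y, dist (a + c) (b + c) = dist a b)
    (s : Set Y) (v y : Y) :
    infEDist y ((· + v) '' s) = infEDist (y - v) s := by
  simpa only [sub_add_cancel] using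
    infEDist_image (x := y - v) (t := s) (isometry_add_right_of_shift hshift v)

end ShiftInvariant

theorem SVInv_image_add_right {X Y : Type*} [AddCommGroup Y] (F : X → Set Y) (f : X → Y) (y : Y) :
    SVInv (fun x => (fun z => z + f x) '' F x) y = {x | y - f x ∈ F x} := by
  ext x
  simp only [SVInv, mem_ofPred_eq, mem_image, ← eq_sub_iff_add_eq, exists_eq_right]

theorem exists_pos_forall_mem_balls
    {X Y : Type*} [PseudoMetricSpace X] [AddCommGroup Y] [PseudoMetricSpace Y]
    (hshift : ∀ a b c : Y, dist (a + c) (b + c) = dist a b)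
    {f : X → Y} {xb : X} {yb : Y} {q ε : ℝ} {κ μ : ℝ≥0∞}
    (hq : 0 < q) (hε : 0 < ε) (hκ : κ ≠ ⊤) (hμ0 : μ ≠ 0) (hf0 : f xb = 0)
    (hf : ∀ x ∈ ball xb ε, ∀ x' ∈ ball xb ε, edist (f x) (f x') ^ q ≤ κ * edist x x') :
    ∃ δ > (0 : ℝ), ∀ y, edist y yb < ENNReal.ofReal δ →
      ∀ x, edist x xb < 2 * ENNReal.ofReal δ + ENNReal.ofReal δ ^ q / μ →
        x ∈ ball xb ε ∧ y - f x ∈ ball yb ε := by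
  let r : ℝ≥0∞ → ℝ≥0∞ := fun D => 2 * D + D ^ q / μ
  have hr : Continuous r := by
    simp only [r, div_eq_mul_inv]
    exact (ENNReal.continuous_const_mul (by simp)).add
      ((ENNReal.continuous_mul_const (by simpa using hμ0)).comp ENNReal.continuous_rpow_const)
  have hs : Continuous fun D => D + (κ * r D) ^ q⁻¹ :=
    continuous_id.add <|
      ENNReal.continuous_rpow_const.comp ((ENNReal.continuous_const_mul hκ).comp hr)
  obtain ⟨δ, hδ, hδrs⟩ := ENNReal.exists_pos_ofReal_lt_of_tendsto
    (φ := fun D => max (r D) (D + (κ * r D) ^ q⁻¹))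
    (by simpa [r, ENNReal.zero_rpow_of_pos hq, hq] using (hr.max hs).tendsto 0)
    (ENNReal.ofReal_pos.2 hε)
  obtain ⟨hrε, hsε⟩ := max_lt_iff.1 hδrs
  refine ⟨δ, hδ, fun y hy x hx => ?_⟩
  have hxε : x ∈ ball xb ε := edist_lt_ofReal.1 (hx.trans hrε)
  have hfx : edist (f x) (f xb) ≤ (κ * r (ENNReal.ofReal δ)) ^ q⁻¹ :=
    (ENNReal.le_rpow_inv_iff hq).2 <| (hf x hxε xb (mem_ball_self hε)).trans (by gcongr)
  refine ⟨hxε, edist_lt_ofReal.1 ?_⟩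
  calc edist (y - f x) yb ≤ edist (y - f x) (y - f xb) + edist y yb := by
        rw [hf0, sub_zero]; exact edist_triangle _ _ _
    _ < (κ * r (ENNReal.ofReal δ)) ^ q⁻¹ + ENNReal.ofReal δ := by
        rw [edist_sub_sub_left_of_shift hshift]
        exact ENNReal.add_lt_add_of_le_of_lt (edist_ne_top _ _) hfx hy
    _ < ENNReal.ofReal ε := by rwa [add_comm]

theorem exists_edist_le_sub_mem_of_regular
    {X Y : Type*} [PseudoMetricSpace X] [CompleteSpace X] [AddCommGroup Y] [PseudoMetricSpace Y]
    (hshift : ∀ a b c : Y, dist (a + c) (b + c) = dist a b)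
    {F : X → Set Y} {f : X → Y} {xb : X} {yb y : Y} {q ε : ℝ} {κ μ r c : ℝ≥0∞} {x₀ : X}
    (hq : 0 < q) (hκ0 : κ ≠ 0) (hκ : κ ≠ ⊤) (hμ0 : μ ≠ 0) (hμ : μ ≠ ⊤)
    (hcl : IsClosed ({p : X × Y | p.2 ∈ F p.1} ∩ closedBall (xb, yb) ε))
    (hreg : ∀ x ∈ ball xb ε, ∀ y ∈ ball yb ε,
      (κ + μ) * infEDist x (SVInv F y) ≤ infEDist y (F x) ^ q)
    (hf : ∀ x ∈ ball xb ε, ∀ x' ∈ ball xb ε, edist (f x) (f x') ^ q ≤ κ * edist x x')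
    (hregion : ∀ x, edist x xb < r → x ∈ ball xb ε ∧ y - f x ∈ ball yb ε)
    (hc : c ≠ ⊤) (hx₀ : edist x₀ xb + c / μ < r) (h₀ : infEDist (y - f x₀) (F x₀) ^ q < c) :
    ∃ z, edist x₀ z ≤ c / μ ∧ y - f z ∈ F z := by
  have hB : ∀ x ∈ closedEBall x₀ (c / μ), x ∈ ball xb ε ∧ y - f x ∈ ball yb ε := fun x hx =>
    hregion x <| calc
      edist x xb ≤ edist x₀ xb + edist x x₀ := by rw [add_comm]; exact edist_triangle _ _ _
      _ ≤ edist x₀ xb + c / μ := by gcongr; exact hx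
      _ < r := hx₀
  obtain ⟨z, hz, hzF⟩ := exists_apply_mem_of_regular_of_holder (g := fun x => y - f x)
    hq hκ0 hκ hμ0 hμ hc hcl
    (fun x hx x' hx' => by
      rw [← _root_.closedBall_prod_same]
      exact ⟨ball_subset_closedBall (hB x' hx').1, ball_subset_closedBall (hB x hx).2⟩)
    (fun x hx => hreg x (hB x hx).1 _ (hB x hx).2)
    (fun x hx x' hx' => by
      rw [edist_sub_sub_left_of_shift hshift]; exact hf x (hB x hx).1 x' (hB x' hx').1)
    h₀
  exact ⟨z, mem_closedEBall'.1 hz, hzF⟩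

theorem exists_regular_sub_of_regular
    {X Y : Type*} [PseudoMetricSpace X] [CompleteSpace X] [AddCommGroup Y] [PseudoMetricSpace Y]
    (hshift : ∀ a b c : Y, dist (a + c) (b + c) = dist a b)
    {F : X → Set Y} {f : X → Y} {xb : X} {yb : Y} {q ε : ℝ} {κ μ : ℝ≥0∞}
    (hxy : yb ∈ F xb) (hf0 : f xb = 0) (hq : 0 < q) (hε : 0 < ε)
    (hκ0 : κ ≠ 0) (hκ : κ ≠ ⊤) (hμ0 : μ ≠ 0) (hμ : μ ≠ ⊤)
    (hcl : IsClosed ({p : X × Y | p.2 ∈ F p.1} ∩ closedBall (xb, yb) ε))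
    (hreg : ∀ x ∈ ball xb ε, ∀ y ∈ ball yb ε,
      (κ + μ) * infEDist x (SVInv F y) ≤ infEDist y (F x) ^ q)
    (hf : ∀ x ∈ ball xb ε, ∀ x' ∈ ball xb ε, edist (f x) (f x') ^ q ≤ κ * edist x x') :
    ∃ δ > (0 : ℝ), ∀ x ∈ ball xb δ, ∀ y ∈ ball yb δ,
      μ * infEDist x {x' | y - f x' ∈ F x'} ≤ infEDist (y - f x) (F x) ^ q := by
  obtain ⟨δ, hδ, hregion⟩ := exists_pos_forall_mem_balls hshift hq hε hκ hμ0 hf0 hf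
  set D := ENNReal.ofReal δ
  refine ⟨δ, hδ, fun x hx y hy => ?_⟩
  have hsolve x₀ c (hx₀ : edist x₀ xb < D) (hcD : c ≤ μ * D + D ^ q)
      (h₀ : infEDist (y - f x₀) (F x₀) ^ q < c) : ∃ z, edist x₀ z ≤ c / μ ∧ y - f z ∈ F z := by
    have hc : c ≠ ⊤ := ne_top_of_le_ne_top (by finiteness) hcD
    refine exists_edist_le_sub_mem_of_regular hshift hq hκ0 hκ hμ0 hμ hcl hreg hf
      (hregion y (edist_lt_ofReal.2 hy)) hc ?_ h₀
    calc edist x₀ xb + c / μ < D + (μ * D + D ^ q) / μ :=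
          ENNReal.add_lt_add_of_lt_of_le (ENNReal.div_ne_top hc hμ0) hx₀ (by gcongr)
      _ = 2 * D + D ^ q / μ := by
          rw [ENNReal.add_div, mul_comm, ENNReal.mul_div_cancel_right hμ0 hμ]; ring
  let S := {x' | y - f x' ∈ F x'}
  rcases lt_or_ge (infEDist (y - f x) (F x) ^ q) (μ * D + D ^ q) with hsmall | hlarge
  · refine le_of_forall_gt_imp_ge_of_dense fun c hc => ?_
    obtain ⟨z, hxz, hz⟩ := hsolve x (min c (μ * D + D ^ q)) (edist_lt_ofReal.2 hx)
      (min_le_right _ _) (lt_min hc hsmall)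
    calc μ * infEDist x S ≤ μ * edist x z := by gcongr; exact infEDist_le_edist_of_mem hz
      _ ≤ μ * (min c (μ * D + D ^ q) / μ) := by gcongr
      _ ≤ c := by rw [ENNReal.mul_div_cancel hμ0 hμ]; exact min_le_left _ _
  -- a large residual at `x` is dominated by the cost of solving from `xb` instead
  · have h₀ : infEDist (y - f xb) (F xb) ^ q < D ^ q := by
      rw [hf0, sub_zero]
      gcongr
      exact (infEDist_le_edist_of_mem hxy).trans_lt (edist_lt_ofReal.2 hy)
    obtain ⟨z, hxbz, hz⟩ := hsolve xb (D ^ q) (by simpa [D] using hδ) le_add_self h₀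
    calc μ * infEDist x S ≤ μ * (edist x xb + edist xb z) := by
          gcongr; exact (infEDist_le_edist_of_mem (s := S) hz).trans (edist_triangle _ _ _)
      _ ≤ μ * (D + D ^ q / μ) := by gcongr; exact (edist_lt_ofReal.2 hx).le
      _ = μ * D + D ^ q := by rw [mul_add, ENNReal.mul_div_cancel hμ0 hμ]
      _ ≤ infEDist (y - f x) (F x) ^ q := hlarge

theorem sub_le_rgq_image_add
    {X Y : Type*} [MetricSpace X] [CompleteSpace X] [AddCommGroup Y] [MetricSpace Y]
    (hshift : ∀ a b c : Y, dist (a + c) (b + c) = dist a b)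
    {F : X → Set Y} {f : X → Y} {xb : X} {yb : Y} {q ρ δ₁ δ₂ : ℝ} {τ κ : ℝ≥0∞}
    (hxy : yb ∈ F xb) (hf0 : f xb = 0) (hq : 0 < q) (hρ : 0 < ρ) (hδ₁ : 0 < δ₁) (hδ₂ : 0 < δ₂)
    (hcl : IsClosed ({p : X × Y | p.2 ∈ F p.1} ∩ closedBall (xb, yb) ρ))
    (hreg : ∀ x ∈ ball xb δ₁, ∀ y ∈ ball yb δ₁,
      τ * infEDist x (SVInv F y) ≤ infEDist y (F x) ^ q)
    (hf : ∀ x ∈ ball xb δ₂, ∀ x' ∈ ball xb δ₂, edist (f x) (f x') ^ q ≤ κ * edist x x') :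
    τ - κ ≤ rgq (fun x => (fun z => z + f x) '' F x) xb yb q := by
  refine le_of_forall_lt_imp_le_of_dense fun μ hμ => ?_
  rcases eq_or_ne μ 0 with rfl | hμ0
  · exact zero_le
  obtain ⟨κ', hκκ', hκ'⟩ := exists_between (lt_tsub_iff_left.2 (lt_tsub_iff_right.1 hμ))
  set ε := min δ₁ (min δ₂ ρ)
  have hε : 0 < ε := lt_min hδ₁ (lt_min hδ₂ hρ)
  have hεδ₁ : ε ≤ δ₁ := min_le_left _ _
  have hεδ₂ : ε ≤ δ₂ := (min_le_right _ _).trans (min_le_left _ _)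
  have hερ : ε ≤ ρ := (min_le_right _ _).trans (min_le_right _ _)
  have hclε : IsClosed ({p : X × Y | p.2 ∈ F p.1} ∩ closedBall (xb, yb) ε) := by
    rw [← inter_eq_right.2 (Metric.closedBall_subset_closedBall hερ), ← inter_assoc]
    exact hcl.inter Metric.isClosed_closedBall
  obtain ⟨δ, hδ, hG⟩ := exists_regular_sub_of_regular hshift hxy hf0 hq hε
    (zero_le.trans_lt hκκ').ne' (ne_top_of_lt hκ') hμ0 (ne_top_of_lt hμ) hclε
    (fun x hx y hy => (mul_le_mul_left (lt_tsub_iff_right.1 hκ').le _).trans <|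
      hreg x (ball_subset_ball hεδ₁ hx) y (ball_subset_ball hεδ₁ hy))
    (fun x hx x' hx' => (hf x (ball_subset_ball hεδ₂ hx) x' (ball_subset_ball hεδ₂ hx')).trans
      (by gcongr))
  refine le_sSup ⟨pos_iff_ne_zero.2 hμ0, ne_top_of_lt hμ, δ, hδ, fun x hx y hy => ?_⟩
  change μ * infEDist x _ ≤ infEDist y _ ^ q
  rw [SVInv_image_add_right, infEDist_image_add_right_of_shift hshift]
  exact hG x hx y hy

theorem holder_lyusternik_graves_general
    {X Y : Type*} [MetricSpace X] [CompleteSpace X]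
    [AddCommGroup Y] [MetricSpace Y]
    (hshift : ∀ a b c : Y, dist (a + c) (b + c) = dist a b)
    (F : X → Set Y) (xb : X) (yb : Y) (hxy : yb ∈ F xb)
    (hcl : ∃ ρ : ℝ, 0 < ρ ∧
      IsClosed ({p : X × Y | p.2 ∈ F p.1} ∩ Metric.closedBall (xb, yb) ρ))
    (f : X → Y) (hf0 : f xb = 0) (q : ℝ) (hq0 : 0 < q) :
    rgq F xb yb q - lipq f xb q ≤ rgq (fun x => (fun z => z + f x) '' F x) xb yb q := by
  obtain ⟨ρ, hρ, hcl⟩ := hcl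
  rw [tsub_le_iff_right, lipq, add_sInf]
  refine sSup_le fun τ ⟨_, _, δ₁, hδ₁, hreg⟩ => le_iInf₂ fun κ ⟨_, δ₂, hδ₂, hf⟩ => ?_
  exact tsub_le_iff_right.1 <|
    sub_le_rgq_image_add hshift hxy hf0 hq0 hρ hδ₁ hδ₂ hcl hreg hf

theorem holder_lyusternik_graves
    {X Y : Type*} [MetricSpace X] [CompleteSpace X]
    [AddCommGroup Y] [MetricSpace Y]
    (hshift : ∀ a b c : Y, dist (a + c) (b + c) = dist a b)
    (F : X → Set Y) (xb : X) (yb : Y) (hxy : yb ∈ F xb)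
    (hcl : ∃ ρ : ℝ, 0 < ρ ∧
      IsClosed ({p : X × Y | p.2 ∈ F p.1} ∩ Metric.closedBall (xb, yb) ρ))
    (f : X → Y) (hf0 : f xb = 0) (q : ℝ) (hq0 : 0 < q) (hq1 : q ≤ 1) :
    rgq F xb yb q - lipq f xb q ≤ rgq (fun x => (fun z => z + f x) '' F x) xb yb q :=
  holder_lyusternik_graves_general hshift F xb yb hxy hcl f hf0 q hq0

end
end

section
/- (Quadratic convergence of a Newton-type method for generalized equations) Let X, Y be Banach spaces, F : X ⇒ Y with closed graph, f : X → Y continuously Fréchet differentiable near x̄ with ∇f Lipschitz continuous at x̄, x̄ a solution of f(x) + F(x) ∋ 0, and suppose F + f is metrically regular at (x̄, 0). Then there exists δ > 0 such that for every solution x⋆ of f(x)+F(x) ∋ 0 with ‖x⋆ − x̄‖ < δ/2 and every starting point u with ‖u − x̄‖ < δ, there exists a sequence {x_k} in B_δ(x̄) with x₀ = u satisfying the Newton iteration f(x_k) + ∇f(x_k)(x_{k+1} − x_k) + F(x_{k+1}) ∋ 0 for all k, and converging quadratically to x⋆ (i.e. there is γ > 0 with ‖x_{k+1} − x⋆‖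 ≤ γ‖x_k − x⋆‖² for all k). -/
open Metric EMetric ENNReal Set Filter

noncomputable section

/-- `G` is metrically regular at `(xb, yb)`. -/
def MetReg {X Y : Type*} [MetricSpace X] [MetricSpace Y]
    (G : X → Set Y) (xb : X) (yb : Y) : Prop :=
  ∃ τ : ℝ, 0 < τ ∧ ∃ δ : ℝ, 0 < δ ∧ ∀ x ∈ ball xb δ, ∀ y ∈ ball yb δ,
    ENNReal.ofReal τ * infEdist x (SVInv G y) ≤ infEdist y (G x)

open scoped Topology NNReal

/-! Write `G := f + F` and, for a base point `u`, let `g z := f z - f u - ∇f(u)(z - u)` be the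
linearization error, so that a Newton iterate from `u` is exactly a solution of `g x ∈ G x`.
On `B_δ(x̄)` the map `g` is `2λδ`-Lipschitz, which is small against the regularity modulus `τ`, so
the iteration `z_{n+1} ∈ G⁻¹(g z_n)` started at the solution `x⋆` is well defined by metric
regularity, contracts geometrically, and its limit solves `g x ∈ G x` because `gph F` is closed.
Its total displacement is at most `4 d(g x⋆, G x⋆) / τ ≤ 4λ‖u - x⋆‖² / τ`: this is the quadratic
estimate, and for `δ` small it keeps the new iterate in the ball, so the step can be repeated;
since also `γ ‖x₀ - x⋆‖ < 1`, the quadratic estimate forces convergence. -/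

theorem exists_seq_of_forall_exists_step {α : Type*} {P : ℕ → α → Prop}
    {R : ℕ → α → α → Prop} {a : α} (h₀ : P 0 a)
    (hstep : ∀ n x, P n x → ∃ y, P (n + 1) y ∧ R n x y) :
    ∃ x : ℕ → α, x 0 = a ∧ ∀ n, P n (x n) ∧ R n (x n) (x (n + 1)) := by
  choose! next hnext using hstep
  let x : ℕ → α := fun n => Nat.rec a next n
  have hP : ∀ n, P n (x n) := fun n => Nat.rec h₀ (fun n ih => (hnext n _ ih).1) n
  exact ⟨x, rfl, fun n => ⟨hP n, (hnext n _ (hP n)).2⟩⟩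

theorem tendsto_zero_of_le_mul_sq {d : ℕ → ℝ} {γ : ℝ} (hγ : 0 ≤ γ) (hd : ∀ k, 0 ≤ d k)
    (h : ∀ k, d (k + 1) ≤ γ * d k ^ 2) (h₀ : γ * d 0 < 1) :
    Tendsto d atTop (𝓝 0) := by
  set q := γ * d 0
  have hq : 0 ≤ q := mul_nonneg hγ (hd 0)
  have hgeom : ∀ k, d k ≤ d 0 * q ^ k := by
    intro k
    induction k with
    | zero => simp
    | succ k ih =>
      have hk : d k ≤ d 0 := ih.trans (mul_le_of_le_one_right (hd 0) (pow_le_one₀ hq h₀.le))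
      calc d (k + 1) ≤ γ * d k * d k := by rw [mul_assoc, ← sq]; exact h k
        _ ≤ q * (d 0 * q ^ k) := mul_le_mul (mul_le_mul_of_nonneg_left hk hγ) ih (hd k) hq
        _ = d 0 * q ^ (k + 1) := by ring
  have hlim : Tendsto (fun k => d 0 * q ^ k) atTop (𝓝 0) := by
    simpa using (tendsto_pow_atTop_nhds_zero_of_lt_one hq h₀).const_mul (d 0)
  exact squeeze_zero hd hgeom hlim

theorem exists_dist_lt_of_ofReal_mul_infEDist_le {X : Type*} [PseudoMetricSpace X]
    {s : Set X} {z : X} {τ c e : ℝ} (hτ : 0 < τ) (hc : 0 ≤ c)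
    (h : ENNReal.ofReal τ * infEDist z s ≤ ENNReal.ofReal c) (he : c / τ < e) :
    ∃ w ∈ s, dist z w < e := by
  have hle : infEDist z s ≤ ENNReal.ofReal (c / τ) := by
    rw [ENNReal.ofReal_div_of_pos hτ,
      ENNReal.le_div_iff_mul_le (.inl (by simpa using hτ)) (.inl (by simp)), mul_comm]
    exact h
  have hlt : infEDist z s < ENNReal.ofReal e :=
    hle.trans_lt ((ENNReal.ofReal_lt_ofReal_iff_of_nonneg (by positivity)).2 he)
  obtain ⟨w, hw, hzw⟩ := infEDist_lt_iff.1 hlt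
  exact ⟨w, hw, edist_lt_ofReal.1 hzw⟩

theorem isClosed_graphOn_add_image {X Y : Type*} [TopologicalSpace X] [TopologicalSpace Y]
    [AddGroup Y] [IsTopologicalAddGroup Y] {F : X → Set Y} (hF : IsClosed {p : X × Y | p.2 ∈ F p.1})
    {f : X → Y} {K : Set X} (hK : IsClosed K) (hf : ContinuousOn f K) :
    IsClosed {p : X × Y | p.1 ∈ K ∧ p.2 ∈ (fun z => f p.1 + z) '' F p.1} := by
  have hcont : ContinuousOn (fun p : X × Y => (p.1, -f p.1 + p.2)) (K ×ˢ univ) :=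
    continuousOn_fst.prodMk
      (((hf.comp continuousOn_fst fun p hp => hp.1).neg).add continuousOn_snd)
  convert hcont.preimage_isClosed_of_isClosed (hK.prod isClosed_univ) hF using 1
  ext p
  simp [image_add_left]

/-- Regularity turns the residual bound `c / 2 ^ n` into a step shorter than `2 c / (τ 2 ^ n)`,
and `4 κ ≤ τ` halves the residual; the steps sum to `4 c / τ`. -/
theorem exists_next_iterate_of_regular_of_lipschitzOnWith {X Y : Type*} [PseudoMetricSpace X]
    [PseudoMetricSpace Y] {G : X → Set Y} {g : X → Y} {z₀ z : X} {τ c : ℝ} {κ : ℝ≥0} {n : ℕ}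
    (hτ : 0 < τ) (hc : 0 < c) (hκ : 4 * κ ≤ τ)
    (hreg : ∀ z ∈ Metric.closedBall z₀ (4 * c / τ),
      ENNReal.ofReal τ * infEDist z (SVInv G (g z)) ≤ infEDist (g z) (G z))
    (hg : LipschitzOnWith κ g (Metric.closedBall z₀ (4 * c / τ)))
    (hz : dist z₀ z ≤ 4 * c / τ - 4 * c / τ / 2 ^ n)
    (hres : infEDist (g z) (G z) ≤ .ofReal (c / 2 ^ n)) :
    ∃ w, (dist z₀ w ≤ 4 * c / τ - 4 * c / τ / 2 ^ (n + 1) ∧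
      infEDist (g w) (G w) ≤ .ofReal (c / 2 ^ (n + 1))) ∧
      g z ∈ G w ∧ dist z w ≤ 4 * c / τ / 2 / 2 ^ n := by
  set ρ := 4 * c / τ
  have hzK : z ∈ Metric.closedBall z₀ ρ := by
    rw [Metric.mem_closedBall']; linarith [show 0 < ρ / 2 ^ n by positivity]
  obtain ⟨w, hw, hzw⟩ := exists_dist_lt_of_ofReal_mul_infEDist_le hτ (by positivity)
    ((hreg z hzK).trans hres) (e := ρ / 2 / 2 ^ n) (by
      rw [show ρ / 2 / 2 ^ n = 2 * (c / 2 ^ n / τ) by simp only [ρ]; ring]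
      linarith [show 0 < c / 2 ^ n / τ by positivity])
  have hwz : dist z₀ w ≤ ρ - ρ / 2 ^ (n + 1) := by
    have := dist_triangle z₀ z w
    rw [pow_succ]
    linarith [show ρ / 2 / 2 ^ n = ρ / 2 ^ n - ρ / (2 ^ n * 2) by field_simp; ring]
  have hwK : w ∈ Metric.closedBall z₀ ρ := by
    rw [Metric.mem_closedBall']; linarith [show 0 < ρ / 2 ^ (n + 1) by positivity]
  refine ⟨w, ⟨hwz, ?_⟩, hw, hzw.le⟩
  calc infEDist (g w) (G w) ≤ edist (g w) (g z) := infEDist_le_edist_of_mem hw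
    _ ≤ ENNReal.ofReal (c / 2 ^ (n + 1)) := by
      rw [edist_dist]
      gcongr
      calc dist (g w) (g z) ≤ κ * dist w z := hg.dist_le_mul w hwK z hzK
        _ ≤ τ / 4 * (ρ / 2 / 2 ^ n) := by
          gcongr
          · linarith
          · rw [dist_comm]; exact hzw.le
        _ = c / 2 ^ (n + 1) := by simp only [ρ]; field_simp; ring

theorem exists_apply_mem_of_regular_of_lipschitzOnWith {X Y : Type*} [PseudoMetricSpace X]
    [CompleteSpace X] [PseudoMetricSpace Y] {G : X → Set Y} {g : X → Y} {z₀ : X} {τ c : ℝ}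
    {κ : ℝ≥0} (hτ : 0 < τ) (hc : 0 < c) (hκ : 4 * κ ≤ τ)
    (hreg : ∀ z ∈ Metric.closedBall z₀ (4 * c / τ),
      ENNReal.ofReal τ * infEDist z (SVInv G (g z)) ≤ infEDist (g z) (G z))
    (hg : LipschitzOnWith κ g (Metric.closedBall z₀ (4 * c / τ)))
    (hG : IsClosed {p : X × Y | p.1 ∈ Metric.closedBall z₀ (4 * c / τ) ∧ p.2 ∈ G p.1})
    (h₀ : infEDist (g z₀) (G z₀) ≤ ENNReal.ofReal c) :
    ∃ x, g x ∈ G x ∧ dist z₀ x ≤ 4 * c / τ := by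
  set ρ := 4 * c / τ
  obtain ⟨z, rfl, hz⟩ := exists_seq_of_forall_exists_step
    (P := fun n z => dist z₀ z ≤ ρ - ρ / 2 ^ n ∧ infEDist (g z) (G z) ≤ .ofReal (c / 2 ^ n))
    (a := z₀) (by simpa using h₀) fun n z hz =>
      exists_next_iterate_of_regular_of_lipschitzOnWith hτ hc hκ hreg hg hz.1 hz.2
  obtain ⟨x, hx⟩ := cauchySeq_tendsto_of_complete
    (cauchySeq_of_le_geometric_two fun n => (hz n).2.2)
  have hxK : dist (z 0) x ≤ ρ := dist_le_of_le_geometric_two_of_tendsto₀ (fun n => (hz n).2.2) hx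
  have hzK : ∀ n, z n ∈ Metric.closedBall (z 0) ρ := fun n => by
    rw [Metric.mem_closedBall']; linarith [(hz n).1.1, show 0 < ρ / 2 ^ n by positivity]
  have hgx : Tendsto (fun n => g (z n)) atTop (𝓝 (g x)) :=
    (hg.continuousOn x (Metric.mem_closedBall'.2 hxK)).tendsto.comp
      (tendsto_nhdsWithin_iff.2 ⟨hx, .of_forall hzK⟩)
  refine ⟨x, ?_, hxK⟩
  exact (hG.mem_of_tendsto ((hx.comp (tendsto_add_atTop_nat 1)).prodMk_nhds hgx)
    (.of_forall fun n => ⟨hzK (n + 1), (hz n).2.1⟩)).2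

section Linearization

variable {E F : Type*} [NormedAddCommGroup E] [NormedSpace ℝ E] [NormedAddCommGroup F]
  [NormedSpace ℝ F] {f : E → F} {K : ℝ≥0}

theorem norm_sub_sub_fderiv_apply_le_of_lipschitzOnWith {s : Set E} (hs : Convex ℝ s)
    (hf : ∀ x ∈ s, DifferentiableAt ℝ f x) (hlip : LipschitzOnWith K (fderiv ℝ f) s) {u z : E}
    (hu : u ∈ s) (hz : z ∈ s) :
    ‖f z - f u - fderiv ℝ f u (z - u)‖ ≤ K * ‖z - u‖ ^ 2 := by
  have hseg := hs.segment_subset hu hz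
  have hbound : ∀ ζ ∈ segment ℝ u z, ‖fderiv ℝ f ζ - fderiv ℝ f u‖ ≤ K * ‖z - u‖ :=
    fun ζ hζ => (hlip.norm_sub_le (hseg hζ) hu).trans
      (mul_le_mul_of_nonneg_left (norm_sub_le_of_mem_segment hζ) K.2)
  calc ‖f z - f u - fderiv ℝ f u (z - u)‖ ≤ K * ‖z - u‖ * ‖z - u‖ :=
        (convex_segment u z).norm_image_sub_le_of_norm_fderiv_le' (fun ζ hζ => hf ζ (hseg hζ))
          hbound (left_mem_segment ℝ u z) (right_mem_segment ℝ u z)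
    _ = K * ‖z - u‖ ^ 2 := by ring

theorem lipschitzOnWith_sub_fderiv_apply_of_lipschitzOnWith {c u : E} {δ : ℝ}
    (hf : ∀ x ∈ ball c δ, DifferentiableAt ℝ f x) (hlip : LipschitzOnWith K (fderiv ℝ f) (ball c δ))
    (hu : u ∈ ball c δ) :
    LipschitzOnWith (2 * K * δ).toNNReal (fun z => f z - f u - fderiv ℝ f u (z - u))
      (ball c δ) := by
  have hbound : ∀ ζ ∈ ball c δ, ‖fderiv ℝ f ζ - fderiv ℝ f u‖ ≤ 2 * K * δ := fun ζ hζ =>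
    calc ‖fderiv ℝ f ζ - fderiv ℝ f u‖ ≤ K * dist ζ u := by
          rw [dist_eq_norm]; exact hlip.norm_sub_le hζ hu
      _ ≤ K * (2 * δ) := by
          gcongr
          linarith [dist_triangle_right ζ u c, mem_ball.1 hζ, mem_ball.1 hu]
      _ = 2 * K * δ := by ring
  refine LipschitzOnWith.of_dist_le' fun z hz z' hz' => ?_
  rw [dist_eq_norm, dist_eq_norm]
  calc ‖f z - f u - fderiv ℝ f u (z - u) - (f z' - f u - fderiv ℝ f u (z' - u))‖
      = ‖f z - f z' - fderiv ℝ f u (z - z')‖ := by simp only [map_sub]; congr 1; abel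
    _ ≤ 2 * K * δ * ‖z - z'‖ :=
      (convex_ball c δ).norm_image_sub_le_of_norm_fderiv_le' hf hbound hz' hz

end Linearization

theorem norm_sub_lt_of_mem_ball_of_norm_sub_lt {X : Type*} [SeminormedAddCommGroup X]
    {xb xs u : X} {δ : ℝ} (hu : u ∈ ball xb δ) (hxs : ‖xs - xb‖ < δ / 2) :
    ‖u - xs‖ < 3 * δ / 2 := by
  linarith [norm_sub_le_norm_sub_add_norm_sub u xb xs, norm_sub_rev xb xs, mem_ball_iff_norm.1 hu]

theorem four_mul_div_mul_le_one_third {K τ δ a : ℝ} (hK : 0 ≤ K) (hτ : 0 < τ)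
    (hδτ : 18 * K * δ ≤ τ) (ha : a ≤ 3 * δ / 2) : 4 * K / τ * a ≤ 1 / 3 := by
  rw [div_mul_eq_mul_div, div_le_iff₀ hτ]
  nlinarith [mul_le_mul_of_nonneg_left ha hK]

theorem closedBall_newton_radius_subset_ball {X : Type*} [SeminormedAddCommGroup X]
    {xb xs u : X} {K τ δ : ℝ} (hK : 0 ≤ K) (hτ : 0 < τ) (hδτ : 18 * K * δ ≤ τ)
    (hxs : ‖xs - xb‖ < δ / 2) (hu : u ∈ ball xb δ) :
    Metric.closedBall xs (4 * (K * ‖u - xs‖ ^ 2) / τ) ⊆ ball xb δ := fun z hz => by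
  have ha := norm_sub_lt_of_mem_ball_of_norm_sub_lt hu hxs
  have hρ : 4 * (K * ‖u - xs‖ ^ 2) / τ ≤ ‖u - xs‖ / 3 :=
    calc 4 * (K * ‖u - xs‖ ^ 2) / τ = 4 * K / τ * ‖u - xs‖ * ‖u - xs‖ := by ring
      _ ≤ 1 / 3 * ‖u - xs‖ := by gcongr; exact four_mul_div_mul_le_one_third hK hτ hδτ ha.le
      _ = ‖u - xs‖ / 3 := by ring
  rw [Metric.mem_closedBall, dist_eq_norm] at hz
  rw [mem_ball_iff_norm]
  linarith [norm_sub_le_norm_sub_add_norm_sub z xs xb]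

theorem exists_newton_step {X Y : Type*} [NormedAddCommGroup X] [NormedSpace ℝ X] [CompleteSpace X]
    [NormedAddCommGroup Y] [NormedSpace ℝ Y] {F : X → Set Y}
    (hF : IsClosed {p : X × Y | p.2 ∈ F p.1}) {f : X → Y} {xb xs u : X} {δ r τ : ℝ} {K : ℝ≥0}
    (hf : ∀ x ∈ ball xb δ, DifferentiableAt ℝ f x)
    (hlip : LipschitzOnWith K (fderiv ℝ f) (ball xb δ))
    (hreg : ∀ x ∈ ball xb r, ∀ y ∈ ball (0 : Y) r,
      ENNReal.ofReal τ * infEDist x (SVInv (fun x => (fun z => f x + z) '' F x) y) ≤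
        infEDist y ((fun z => f x + z) '' F x))
    (hK : 0 < K) (hτ : 0 < τ) (hδr : δ ≤ r) (hδτ : 18 * K * δ ≤ τ) (hδK : 4 * K * δ ^ 2 < r)
    (hxs : -(f xs) ∈ F xs) (hxsb : ‖xs - xb‖ < δ / 2) (hu : u ∈ ball xb δ) :
    ∃ x ∈ ball xb δ, ‖x - xs‖ ≤ 4 * K / τ * ‖u - xs‖ ^ 2 ∧
      -(f u + fderiv ℝ f u (x - u)) ∈ F x := by
  set G : X → Set Y := fun x => (fun z => f x + z) '' F x
  set g : X → Y := fun z => f z - f u - fderiv ℝ f u (z - u)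
  have hδ : 0 < δ := dist_nonneg.trans_lt (Metric.mem_ball.1 hu)
  have hxsδ : xs ∈ ball xb δ := by rw [mem_ball_iff_norm]; linarith
  rcases (norm_nonneg (u - xs)).eq_or_lt with ha0 | ha0
  · obtain rfl : u = xs := by rwa [eq_comm, norm_sub_eq_zero_iff] at ha0
    exact ⟨u, hu, by simp, by simpa using hxs⟩
  set c := (K : ℝ) * ‖u - xs‖ ^ 2
  have hc : 0 < c := by positivity
  have hKδ : Metric.closedBall xs (4 * c / τ) ⊆ ball xb δ :=
    closedBall_newton_radius_subset_ball K.2 hτ hδτ hxsb hu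
  have hgsmall : ∀ z ∈ ball xb δ, ‖g z‖ < r := fun z hz => by
    have hzu : ‖z - u‖ < 2 * δ := by
      linarith [norm_sub_le_norm_sub_add_norm_sub z xb u, norm_sub_rev xb u,
        mem_ball_iff_norm.1 hz, mem_ball_iff_norm.1 hu]
    calc ‖g z‖ ≤ K * ‖z - u‖ ^ 2 :=
          norm_sub_sub_fderiv_apply_le_of_lipschitzOnWith (convex_ball xb δ) hf hlip hu hz
      _ ≤ K * (2 * δ) ^ 2 := by gcongr
      _ < r := by linarith
  have hκ : 4 * ((2 * K * δ).toNNReal : ℝ) ≤ τ := by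
    rw [Real.coe_toNNReal _ (by positivity)]; linarith
  have hg₀ : infEDist (g xs) (G xs) ≤ ENNReal.ofReal c := by
    have h0 : (0 : Y) ∈ G xs := ⟨-f xs, hxs, by simp⟩
    refine (infEDist_le_edist_of_mem h0).trans ?_
    rw [edist_dist, dist_zero_right]
    exact ENNReal.ofReal_le_ofReal
      ((norm_sub_sub_fderiv_apply_le_of_lipschitzOnWith (convex_ball xb δ) hf hlip hu hxsδ).trans_eq
        (by rw [norm_sub_rev]))
  obtain ⟨x, hx, hdist⟩ := exists_apply_mem_of_regular_of_lipschitzOnWith hτ hc hκ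
    (fun z hz => hreg z (ball_subset_ball hδr (hKδ hz)) (g z)
      (mem_ball_zero_iff.2 (hgsmall z (hKδ hz))))
    ((lipschitzOnWith_sub_fderiv_apply_of_lipschitzOnWith hf hlip hu).mono hKδ)
    (isClosed_graphOn_add_image hF Metric.isClosed_closedBall
      fun z hz => (hf z (hKδ hz)).continuousAt.continuousWithinAt) hg₀
  refine ⟨x, hKδ (Metric.mem_closedBall'.2 hdist), ?_, ?_⟩
  · rw [← dist_eq_norm, dist_comm]
    convert hdist using 1
    simp only [c]; ring
  · simp only [G, image_add_left, mem_preimage] at hx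
    convert hx using 1
    simp only [g]; abel

theorem newton_method_quadratic_convergence_general
    {X Y : Type*} [NormedAddCommGroup X] [NormedSpace ℝ X] [CompleteSpace X]
    [NormedAddCommGroup Y] [NormedSpace ℝ Y]
    (F : X → Set Y) (hcl : IsClosed {p : X × Y | p.2 ∈ F p.1})
    (f : X → Y) (xb : X)
    (hdiff : ∃ ε : ℝ, 0 < ε ∧ (∀ x ∈ ball xb ε, DifferentiableAt ℝ f x) ∧
      ContinuousOn (fderiv ℝ f) (ball xb ε))
    (hlip : ∃ lam δ₁ : ℝ, 0 < lam ∧ 0 < δ₁ ∧ ∀ x ∈ ball xb δ₁, ∀ x' ∈ ball xb δ₁,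
      ‖fderiv ℝ f x - fderiv ℝ f x'‖ ≤ lam * ‖x - x'‖)
    (hreg : MetReg (fun x => (fun z => f x + z) '' F x) xb 0) :
    ∃ δ : ℝ, 0 < δ ∧
      ∀ xs : X, -(f xs) ∈ F xs → ‖xs - xb‖ < δ / 2 →
        ∀ u ∈ ball xb δ, ∃ x : ℕ → X,
          x 0 = u ∧
          (∀ k : ℕ, x k ∈ ball xb δ) ∧
          (∀ k : ℕ, -(f (x k) + fderiv ℝ f (x k) (x (k + 1) - x k)) ∈ F (x (k + 1))) ∧
          Tendsto x atTop (nhds xs) ∧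
          (∃ γ : ℝ, 0 < γ ∧ ∀ k : ℕ,
            ‖x (k + 1) - xs‖ ≤ γ * ‖x k - xs‖ ^ 2) := by
  obtain ⟨ε, hε, hf, -⟩ := hdiff
  obtain ⟨K, δ₁, hK, hδ₁, hlip⟩ := hlip
  lift K to ℝ≥0 using hK.le
  obtain ⟨τ, hτ, r, hr, hreg⟩ := hreg
  obtain ⟨δ, hδ, hδε, hδδ₁, hδr, hδτ, hδK⟩ : ∃ δ, 0 < δ ∧ δ ≤ ε ∧ δ ≤ δ₁ ∧ δ ≤ r ∧
      δ ≤ τ / (18 * K) ∧ δ ≤ 1 / (8 * K) :=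
    ⟨min (min ε δ₁) (min r (min (τ / (18 * K)) (1 / (8 * K)))), by positivity, by
      simp only [min_le_iff, le_refl, true_or, or_true, and_self]⟩
  rw [le_div_iff₀' (by positivity)] at hδτ hδK
  have hlipδ : LipschitzOnWith K (fderiv ℝ f) (ball xb δ) :=
    LipschitzOnWith.of_dist_le_mul fun x hx x' hx' => by
      simpa only [dist_eq_norm] using
        hlip x (ball_subset_ball hδδ₁ hx) x' (ball_subset_ball hδδ₁ hx')
  refine ⟨δ, hδ, fun xs hxs hxsb u hu => ?_⟩
  obtain ⟨x, hx0, hx⟩ := exists_seq_of_forall_exists_step (P := fun _ p => p ∈ ball xb δ) hu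
    fun _ p hp => exists_newton_step hcl (fun x hx => hf x (ball_subset_ball hδε hx)) hlipδ hreg
      (by exact_mod_cast hK) hτ hδr hδτ (by nlinarith) hxs hxsb hp
  refine ⟨x, hx0, fun k => (hx k).1, fun k => (hx k).2.2, ?_, 4 * K / τ, by positivity,
    fun k => (hx k).2.1⟩
  rw [tendsto_iff_norm_sub_tendsto_zero]
  refine tendsto_zero_of_le_mul_sq (by positivity) (fun k => norm_nonneg _) (fun k => (hx k).2.1) ?_
  rw [hx0]
  exact (four_mul_div_mul_le_one_third K.2 hτ hδτ
    (norm_sub_lt_of_mem_ball_of_norm_sub_lt hu hxsb).le).trans_lt (by norm_num)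

theorem newton_method_quadratic_convergence
    {X Y : Type*} [NormedAddCommGroup X] [NormedSpace ℝ X] [CompleteSpace X]
    [NormedAddCommGroup Y] [NormedSpace ℝ Y] [CompleteSpace Y]
    (F : X → Set Y) (hcl : IsClosed {p : X × Y | p.2 ∈ F p.1})
    (f : X → Y) (xb : X)
    (hdiff : ∃ ε : ℝ, 0 < ε ∧ (∀ x ∈ ball xb ε, DifferentiableAt ℝ f x) ∧
      ContinuousOn (fderiv ℝ f) (ball xb ε))
    (hlip : ∃ lam δ₁ : ℝ, 0 < lam ∧ 0 < δ₁ ∧ ∀ x ∈ ball xb δ₁, ∀ x' ∈ ball xb δ₁,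
      ‖fderiv ℝ f x - fderiv ℝ f x'‖ ≤ lam * ‖x - x'‖)
    (hsol : -(f xb) ∈ F xb)
    (hreg : MetReg (fun x => (fun z => f x + z) '' F x) xb 0) :
    ∃ δ : ℝ, 0 < δ ∧
      ∀ xs : X, -(f xs) ∈ F xs → ‖xs - xb‖ < δ / 2 →
        ∀ u ∈ ball xb δ, ∃ x : ℕ → X,
          x 0 = u ∧
          (∀ k : ℕ, x k ∈ ball xb δ) ∧
          (∀ k : ℕ, -(f (x k) + fderiv ℝ f (x k) (x (k + 1) - x k)) ∈ F (x (k + 1))) ∧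
          Tendsto x atTop (nhds xs) ∧
          (∃ γ : ℝ, 0 < γ ∧ ∀ k : ℕ,
            ‖x (k + 1) - xs‖ ≤ γ * ‖x k - xs‖ ^ 2) :=
  newton_method_quadratic_convergence_general F hcl f xb hdiff hlip hreg
end
end

section
/- (Uniform regularity of partial linearizations) Let X, Y be Banach spaces, F : X ⇒ Y with closed graph, f : X → Y continuously Fréchet differentiable near x̄ with ∇f Lipschitz continuous at x̄, 0 ∈ f(x̄) + F(x̄), and suppose F + f is metrically regular at (x̄, 0). For each u ∈ X define Φ_u(x) := f(u) + ∇f(u)(x − u) + F(x). Then there exist τ > 0 and δ' > 0 such that τ·d(x, Φ_u⁻¹(0)) ≤ d(0, Φ_u(x)) for all u, x ∈ B_{δ'}(x̄). -/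
/-!
Write `G := f + F` and `g u v := f u + f'(u)(v - u) - f v`, so that the partial linearization is
`Φ_u = G + g u`. Since `f'` is `λ`-Lipschitz, `g u` is `2λρ`-Lipschitz on `closedBall xb ρ` and
vanishes at `u`: for small `ρ` it is a perturbation of Lipschitz constant `μ ≤ τ/4` of the
metrically regular map `G`, and metric regularity survives such perturbations (Lyusternik–Graves).
From `v`, regularity of `G` gives `v'` with `-g v ∈ G v'` and `d(v, v') ≤ (2/τ)·d(-g v, G v)`; the
new residual `d(-g v', G v')` is at most `μ·d(v, v')`, half the old one. The iterates are Cauchy,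
and by closedness of the graph their limit solves `0 ∈ G + g`, within `(4/τ)` times the initial
residual. Starting the iteration at `x` when its residual is small, and at `xb` otherwise, gives
the uniform modulus `τ/8`.
-/

open Metric EMetric ENNReal Set

noncomputable section

open Filter Topology

theorem iterate_mem_and_two_pow_mul_le_of_halving_step {X : Type*} [PseudoEMetricSpace X]
    {K : Set X} {r : X → ℝ≥0∞} {c : ℝ≥0∞} {T : X → X}
    (hT : ∀ v ∈ K, r v ≠ ∞ → edist v (T v) ≤ c * r v ∧ (T v ∈ K → 2 * r (T v) ≤ r v))
    {x₀ : X} (hr₀ : r x₀ ≠ ∞) (hK : closedEBall x₀ (2 * c * r x₀) ⊆ K) (n : ℕ) :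
    T^[n] x₀ ∈ K ∧ r (T^[n] x₀) ≠ ∞ ∧ 2 ^ n * r (T^[n] x₀) ≤ r x₀ := by
  have hgood {n : ℕ} {v : X}
      (h : 2 ^ n * r v ≤ r x₀ ∧ edist x₀ v + 2 * c * r v ≤ 2 * c * r x₀) :
      v ∈ K ∧ r v ≠ ∞ ∧ 2 ^ n * r v ≤ r x₀ :=
    ⟨hK (mem_closedEBall'.2 (le_of_add_le_left h.2)),
      ne_top_of_le_ne_top hr₀ ((le_mul_of_one_le_left' (one_le_pow₀ one_le_two)).trans h.1), h.1⟩
  refine hgood (n := n) ?_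
  -- `edist x₀ v + 2 c r(v)` does not increase along the iteration
  induction n with
  | zero => simp
  | succ n ih =>
    obtain ⟨hmem, hfin, -⟩ := hgood ih
    set v := T^[n] x₀
    rw [Function.iterate_succ_apply']
    obtain ⟨hdist, hhalf⟩ := hT v hmem hfin
    have hmem' : T v ∈ K := by
      refine hK (mem_closedEBall'.2 ((edist_triangle _ v _).trans ?_))
      calc edist x₀ v + edist v (T v) ≤ edist x₀ v + 2 * c * r v := by
            gcongr
            exact hdist.trans (by gcongr; exact le_mul_of_one_le_left' one_le_two)
        _ ≤ 2 * c * r x₀ := ih.2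
    replace hhalf := hhalf hmem'
    constructor
    · calc 2 ^ (n + 1) * r (T v) = 2 ^ n * (2 * r (T v)) := by ring
        _ ≤ 2 ^ n * r v := by gcongr
        _ ≤ r x₀ := ih.1
    · calc edist x₀ (T v) + 2 * c * r (T v) ≤ edist x₀ v + c * r v + c * (2 * r (T v)) := by
            rw [mul_comm 2 c, mul_assoc]
            gcongr
            exact (edist_triangle _ v _).trans (by gcongr)
        _ ≤ edist x₀ v + c * r v + c * r v := by gcongr
        _ = edist x₀ v + 2 * c * r v := by ring
        _ ≤ 2 * c * r x₀ := ih.2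

theorem exists_tendsto_of_halving_step {X : Type*} [PseudoEMetricSpace X] [CompleteSpace X]
    {K : Set X} {r : X → ℝ≥0∞} {R : X → X → Prop} {c : ℝ≥0∞} (hc : c ≠ ∞)
    (hstep : ∀ v ∈ K, r v ≠ ∞ →
      ∃ v', R v v' ∧ edist v v' ≤ c * r v ∧ (v' ∈ K → 2 * r v' ≤ r v))
    {x₀ : X} (hr₀ : r x₀ ≠ ∞) (hK : closedEBall x₀ (2 * c * r x₀) ⊆ K) :
    ∃ x : ℕ → X, ∃ xs, (∀ n, x n ∈ K ∧ R (x n) (x (n + 1))) ∧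
      Tendsto x atTop (𝓝 xs) ∧ edist x₀ xs ≤ 2 * c * r x₀ := by
  have hstep' : ∀ v, ∃ v', v ∈ K → r v ≠ ∞ →
      R v v' ∧ edist v v' ≤ c * r v ∧ (v' ∈ K → 2 * r v' ≤ r v) := by
    intro v
    by_cases h : v ∈ K ∧ r v ≠ ∞
    · obtain ⟨v', hv'⟩ := hstep v h.1 h.2
      exact ⟨v', fun _ _ => hv'⟩
    · exact ⟨v, fun hv hr => absurd ⟨hv, hr⟩ h⟩
  choose T hT using hstep'
  have hiter := iterate_mem_and_two_pow_mul_le_of_halving_step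
    (fun v hv hfin => (hT v hv hfin).2) hr₀ hK
  set x : ℕ → X := fun n => T^[n] x₀
  have hnext (n : ℕ) : R (x n) (x (n + 1)) ∧ edist (x n) (x (n + 1)) ≤ c * r (x n) := by
    have h := hT (x n) (hiter n).1 (hiter n).2.1
    rw [← Function.iterate_succ_apply' T n x₀] at h
    exact ⟨h.1, h.2.1⟩
  have hgeom (n : ℕ) : edist (x n) (x (n + 1)) ≤ c * r x₀ / 2 ^ n := by
    refine (hnext n).2.trans ?_
    rw [mul_div_assoc]
    gcongr
    rw [ENNReal.le_div_iff_mul_le (by simp) (by simp), mul_comm]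
    exact (hiter n).2.2
  obtain ⟨xs, hxs⟩ := cauchySeq_tendsto_of_complete
    (cauchySeq_of_edist_le_geometric_two _ (mul_ne_top hc hr₀) hgeom)
  refine ⟨x, xs, fun n => ⟨(hiter n).1, (hnext n).1⟩, hxs, ?_⟩
  rw [mul_assoc]
  exact edist_le_of_edist_le_geometric_two_of_tendsto₀ _ hgeom hxs

theorem zero_mem_add_image_iff {Y : Type*} [AddGroup Y] {a : Y} {s : Set Y} :
    (0 : Y) ∈ (a + ·) '' s ↔ -a ∈ s := by
  simp [Set.image_add_left]

theorem infEDist_zero_add_image {Y : Type*} [SeminormedAddCommGroup Y] (a : Y) (s : Set Y) :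
    infEDist 0 ((a + ·) '' s) = infEDist (-a) s := by
  simpa using infEDist_image (isometry_add_left a) (x := -a) (t := s)

section

variable {X Y : Type*}

section

variable [PseudoEMetricSpace X] [PseudoEMetricSpace Y]

theorem exists_mem_svInv_edist_le {G : X → Set Y} {v : X} {y : Y} {τ : ℝ≥0∞}
    (hτ0 : τ ≠ 0) (hτ : τ ≠ ∞) (hreg : τ * infEDist v (SVInv G y) ≤ infEDist y (G v))
    (hcl : IsClosed (G v)) (hfin : infEDist y (G v) ≠ ∞) :
    ∃ v', y ∈ G v' ∧ edist v v' ≤ 2 / τ * infEDist y (G v) := by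
  rcases eq_or_ne (infEDist y (G v)) 0 with h0 | h0
  · refine ⟨v, ?_, by simp⟩
    rwa [← hcl.closure_eq, mem_closure_iff_infEDist_zero]
  · -- the factor `2` leaves room for an infimum that need not be attained
    have hlt : infEDist v (SVInv G y) < 2 / τ * infEDist y (G v) := by
      have hdτ : infEDist y (G v) / τ ≠ ∞ := div_ne_top hfin hτ0
      calc infEDist v (SVInv G y) ≤ infEDist y (G v) / τ := by
            rwa [ENNReal.le_div_iff_mul_le (.inl hτ0) (.inl hτ), mul_comm]
        _ < infEDist y (G v) / τ + infEDist y (G v) / τ :=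
            ENNReal.lt_add_right hdτ (ENNReal.div_pos h0 hτ).ne'
        _ = 2 / τ * infEDist y (G v) := by rw [← two_mul]; simp only [div_eq_mul_inv]; ring
    obtain ⟨v', hv', hvv'⟩ := infEDist_lt_iff.1 hlt
    exact ⟨v', hv', hvv'.le⟩

end

section

variable [PseudoEMetricSpace X] [CompleteSpace X] [SeminormedAddCommGroup Y]

theorem exists_neg_mem_edist_le_of_lipschitzOnWith {G : X → Set Y} {g : X → Y} {K : Set X}
    {τ : ℝ≥0∞} {μ : NNReal} (hτ0 : τ ≠ 0) (hτ : τ ≠ ∞)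
    (hreg : ∀ x ∈ K, τ * infEDist x (SVInv G (-g x)) ≤ infEDist (-g x) (G x))
    (hgraph : IsClosed {p : X × Y | p.1 ∈ K ∧ p.2 ∈ G p.1})
    (hg : LipschitzOnWith μ g K) (hμ : 4 * μ ≤ τ) {x₀ : X}
    (hfin : infEDist (-g x₀) (G x₀) ≠ ∞)
    (hK : closedEBall x₀ (4 / τ * infEDist (-g x₀) (G x₀)) ⊆ K) :
    ∃ xs, -g xs ∈ G xs ∧ edist x₀ xs ≤ 4 / τ * infEDist (-g x₀) (G x₀) := by
  have hGcl (v : X) (hv : v ∈ K) : IsClosed (G v) := by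
    convert hgraph.preimage (Continuous.prodMk_right v) using 1
    ext y
    simp [hv]
  have hstep : ∀ v ∈ K, infEDist (-g v) (G v) ≠ ∞ → ∃ v', -g v ∈ G v' ∧
      edist v v' ≤ 2 / τ * infEDist (-g v) (G v) ∧
      (v' ∈ K → 2 * infEDist (-g v') (G v') ≤ infEDist (-g v) (G v)) := by
    intro v hv hv_fin
    obtain ⟨v', hv', hvv'⟩ := exists_mem_svInv_edist_le hτ0 hτ (hreg v hv) (hGcl v hv) hv_fin
    refine ⟨v', hv', hvv', fun hv'K => ?_⟩
    calc 2 * infEDist (-g v') (G v') ≤ 2 * edist (-g v') (-g v) := by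
          gcongr; exact infEDist_le_edist_of_mem hv'
      _ ≤ 2 * (μ * (2 / τ * infEDist (-g v) (G v))) := by
          rw [edist_neg_neg, edist_comm]
          gcongr
          exact hg.edist_le_mul_of_le hv hv'K hvv'
      _ = 4 * μ / τ * infEDist (-g v) (G v) := by simp only [div_eq_mul_inv]; ring
      _ ≤ infEDist (-g v) (G v) :=
          mul_le_of_le_one_left zero_le (ENNReal.div_le_of_le_mul (by rwa [one_mul]))
  have h4 : 2 * (2 / τ) = 4 / τ := by simp only [div_eq_mul_inv]; ring
  obtain ⟨x, xs, hx, hxs, hdist⟩ := exists_tendsto_of_halving_step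
    (div_ne_top ofNat_ne_top hτ0) hstep hfin (by rwa [h4])
  rw [h4] at hdist
  have hxsK : xs ∈ K := hK (mem_closedEBall'.2 hdist)
  have hgx : Tendsto (fun n => g (x n)) atTop (𝓝 (g xs)) :=
    (hg.continuousOn xs hxsK).tendsto.comp
      (tendsto_nhdsWithin_iff.2 ⟨hxs, Eventually.of_forall fun n => (hx n).1⟩)
  refine ⟨xs, ?_, hdist⟩
  exact (hgraph.mem_of_tendsto ((hxs.comp (tendsto_add_atTop_nat 1)).prodMk_nhds hgx.neg)
    (Eventually.of_forall fun n => ⟨(hx (n + 1)).1, (hx n).2⟩)).2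

end

section

variable [PseudoMetricSpace X] [CompleteSpace X] [SeminormedAddCommGroup Y]

theorem exists_neg_mem_edist_le_of_mem_closedBall {G : X → Set Y} {g : X → Y} {xb x₀ : X}
    {τ ρ : ℝ} {μ : NNReal} (hτ : 0 < τ)
    (hreg : ∀ x ∈ closedBall xb ρ,
      ENNReal.ofReal τ * infEDist x (SVInv G (-g x)) ≤ infEDist (-g x) (G x))
    (hgraph : IsClosed {p : X × Y | p.1 ∈ closedBall xb ρ ∧ p.2 ∈ G p.1})
    (hg : LipschitzOnWith μ g (closedBall xb ρ)) (hμ : 4 * (μ : ℝ) ≤ τ)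
    (hx₀ : x₀ ∈ Metric.closedBall xb (ρ / 2))
    (hr : infEDist (-g x₀) (G x₀) ≤ ENNReal.ofReal (τ * ρ / 8)) :
    ∃ xs, -g xs ∈ G xs ∧ edist x₀ xs ≤ ENNReal.ofReal (4 / τ) * infEDist (-g x₀) (G x₀) ∧
      edist x₀ xs ≤ ENNReal.ofReal (ρ / 2) := by
  have hρ : 0 ≤ ρ / 2 := dist_nonneg.trans hx₀
  have h4τ : 4 / ENNReal.ofReal τ = ENNReal.ofReal (4 / τ) := by
    rw [ENNReal.ofReal_div_of_pos hτ, ENNReal.ofReal_ofNat]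
  have hρ2 : ENNReal.ofReal (4 / τ) * infEDist (-g x₀) (G x₀) ≤ ENNReal.ofReal (ρ / 2) := by
    calc ENNReal.ofReal (4 / τ) * infEDist (-g x₀) (G x₀)
        ≤ ENNReal.ofReal (4 / τ) * ENNReal.ofReal (τ * ρ / 8) := by gcongr
      _ = ENNReal.ofReal (ρ / 2) := by
        rw [← ENNReal.ofReal_mul (by positivity)]
        congr 1
        field_simp
        ring
  have hK : closedEBall x₀ (4 / ENNReal.ofReal τ * infEDist (-g x₀) (G x₀)) ⊆ closedBall xb ρ := by
    intro y hy
    have hyx₀ : dist y x₀ ≤ ρ / 2 := by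
      rw [← edist_le_ofReal hρ]
      exact (mem_closedEBall.1 hy).trans (h4τ ▸ hρ2)
    exact mem_closedBall.2 (by linarith [dist_triangle y x₀ xb, mem_closedBall.1 hx₀])
  have hμτ : 4 * (μ : ℝ≥0∞) ≤ ENNReal.ofReal τ := by
    rw [← ENNReal.ofReal_coe_nnreal, ← ENNReal.ofReal_ofNat, ← ENNReal.ofReal_mul (by norm_num)]
    exact ENNReal.ofReal_le_ofReal hμ
  obtain ⟨xs, hxs, hd⟩ := exists_neg_mem_edist_le_of_lipschitzOnWith
    (ENNReal.ofReal_pos.2 hτ).ne' ofReal_ne_top hreg hgraph hg hμτ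
    (ne_top_of_le_ne_top ofReal_ne_top hr) hK
  rw [h4τ] at hd
  exact ⟨xs, hxs, hd, hd.trans hρ2⟩

theorem ofReal_mul_infEDist_svInv_le_of_lipschitzOnWith {G : X → Set Y} {g : X → Y} {xb : X}
    {τ δ ρ : ℝ} {μ : NNReal} (hτ : 0 < τ)
    (hreg : ∀ x ∈ ball xb δ, ∀ y ∈ ball (0 : Y) δ,
      ENNReal.ofReal τ * infEDist x (SVInv G y) ≤ infEDist y (G x))
    (hρδ : ρ < δ) (hgraph : IsClosed {p : X × Y | p.1 ∈ closedBall xb ρ ∧ p.2 ∈ G p.1})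
    (hg : LipschitzOnWith μ g (closedBall xb ρ)) (hμ : 4 * (μ : ℝ) ≤ τ)
    (hgδ : ∀ x ∈ closedBall xb ρ, ‖g x‖ < δ)
    (hxb : infEDist (-g xb) (G xb) ≤ ENNReal.ofReal (τ * ρ / 8)) :
    ∀ x ∈ Metric.ball xb (ρ / 2), ENNReal.ofReal (τ / 8) *
      infEDist x (SVInv (fun v => (g v + ·) '' G v) 0) ≤ infEDist 0 ((g x + ·) '' G x) := by
  intro x hx
  have hS : SVInv (fun v => (g v + ·) '' G v) 0 = {v | -g v ∈ G v} := by
    ext v; exact zero_mem_add_image_iff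
  rw [hS, infEDist_zero_add_image]
  have hregK (v : X) (hv : v ∈ closedBall xb ρ) :=
    hreg v (closedBall_subset_ball hρδ hv) (-g v) (by simpa using hgδ v hv)
  -- either the residual at `x` is small and the iteration starts at `x`, or it is large and
  -- any zero found from `xb` is close enough
  by_cases hr : infEDist (-g x) (G x) ≤ ENNReal.ofReal (τ * ρ / 8)
  · obtain ⟨xs, hxs, hd, -⟩ := exists_neg_mem_edist_le_of_mem_closedBall hτ hregK hgraph hg hμ
      (ball_subset_closedBall hx) hr
    calc ENNReal.ofReal (τ / 8) * infEDist x {v | -g v ∈ G v}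
        ≤ ENNReal.ofReal (τ / 8) * (ENNReal.ofReal (4 / τ) * infEDist (-g x) (G x)) := by
          gcongr; exact (infEDist_le_edist_of_mem (s := {v | -g v ∈ G v}) hxs).trans hd
      _ = ENNReal.ofReal (1 / 2) * infEDist (-g x) (G x) := by
          rw [← mul_assoc, ← ENNReal.ofReal_mul (by positivity)]
          congr 2
          field_simp
          ring
      _ ≤ infEDist (-g x) (G x) :=
          mul_le_of_le_one_left zero_le (ENNReal.ofReal_le_one.2 (by norm_num))
  · rw [not_le] at hr
    have hρ : 0 < ρ / 2 := dist_nonneg.trans_lt hx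
    obtain ⟨xs, hxs, -, hd⟩ := exists_neg_mem_edist_le_of_mem_closedBall hτ hregK hgraph hg hμ
      (mem_closedBall_self hρ.le) hxb
    have hxxs : edist x xs ≤ ENNReal.ofReal ρ :=
      calc edist x xs ≤ edist x xb + edist xb xs := edist_triangle _ _ _
        _ ≤ ENNReal.ofReal (ρ / 2) + ENNReal.ofReal (ρ / 2) :=
            add_le_add (edist_lt_ofReal.2 hx).le hd
        _ = ENNReal.ofReal ρ := by rw [← ENNReal.ofReal_add hρ.le hρ.le, add_halves]
    calc ENNReal.ofReal (τ / 8) * infEDist x {v | -g v ∈ G v}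
        ≤ ENNReal.ofReal (τ / 8) * ENNReal.ofReal ρ := by
          gcongr; exact (infEDist_le_edist_of_mem (s := {v | -g v ∈ G v}) hxs).trans hxxs
      _ = ENNReal.ofReal (τ * ρ / 8) := by rw [← ENNReal.ofReal_mul (by positivity)]; ring_nf
      _ ≤ infEDist (-g x) (G x) := hr.le

theorem ofReal_mul_infEDist_svInv_le_of_lipschitzOnWith_of_eq_zero {G : X → Set Y} {g : X → Y}
    {xb u : X} {τ δ ρ : ℝ} {μ : NNReal} (hτ : 0 < τ)
    (hreg : ∀ x ∈ ball xb δ, ∀ y ∈ ball (0 : Y) δ,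
      ENNReal.ofReal τ * infEDist x (SVInv G y) ≤ infEDist y (G x))
    (hρδ : ρ < δ) (hτρ : τ * ρ < δ)
    (hgraph : IsClosed {p : X × Y | p.1 ∈ closedBall xb ρ ∧ p.2 ∈ G p.1})
    (hg : LipschitzOnWith μ g (closedBall xb ρ)) (hμ : 4 * (μ : ℝ) ≤ τ)
    (hu : u ∈ Metric.ball xb (ρ / 2)) (hgu : g u = 0) (hxb : 0 ∈ G xb) :
    ∀ x ∈ Metric.ball xb (ρ / 2), ENNReal.ofReal (τ / 8) *
      infEDist x (SVInv (fun v => (g v + ·) '' G v) 0) ≤ infEDist 0 ((g x + ·) '' G x) := by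
  have hρ : 0 < ρ / 2 := dist_nonneg.trans_lt hu
  have hgv (v : X) (hv : v ∈ closedBall xb ρ) : ‖g v‖ ≤ μ * dist v u := by
    simpa [hgu] using
      hg.dist_le_mul v hv u (ball_subset_closedBall (ball_subset_ball (by linarith) hu))
  refine ofReal_mul_infEDist_svInv_le_of_lipschitzOnWith hτ hreg hρδ hgraph hg hμ
    (fun v hv => ?_) ?_
  · nlinarith [hgv v hv, dist_triangle_right v u xb, mem_closedBall.1 hv, mem_ball.1 hu, μ.2]
  · calc infEDist (-g xb) (G xb) ≤ edist (-g xb) 0 := infEDist_le_edist_of_mem hxb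
      _ ≤ ENNReal.ofReal (τ * ρ / 8) := by
        rw [edist_dist, dist_zero_right, norm_neg]
        refine ENNReal.ofReal_le_ofReal ?_
        nlinarith [hgv xb (mem_closedBall_self (by linarith)), mem_ball'.1 hu,
          dist_nonneg (x := xb) (y := u), μ.2]

end

end

theorem lipschitzOnWith_affine_sub_of_norm_fderiv_sub_le {E F : Type*}
    [NormedAddCommGroup E] [NormedSpace ℝ E] [NormedAddCommGroup F] [NormedSpace ℝ F]
    {f : E → F} {s : Set E} {u : E} {A : E →L[ℝ] F} {C : NNReal} (hs : Convex ℝ s)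
    (hf : ∀ x ∈ s, DifferentiableAt ℝ f x) (hC : ∀ x ∈ s, ‖fderiv ℝ f x - A‖ ≤ C) :
    LipschitzOnWith C (fun v => f u + A (v - u) - f v) s := by
  refine hs.lipschitzOnWith_of_nnnorm_hasFDerivWithin_le (f' := fun x => A - fderiv ℝ f x)
    (fun x hx => ?_) (fun x hx => ?_)
  · have h := ((hasFDerivAt_const (f u) x).add (A.hasFDerivAt.comp x (hasFDerivAt_sub_const u))).sub
      (hf x hx).hasFDerivAt
    convert h.hasFDerivWithinAt using 1 <;> ext <;> simp
  · rw [← NNReal.coe_le_coe, coe_nnnorm, norm_sub_rev]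
    exact hC x hx

theorem lipschitzOnWith_sub_linearization {E F : Type*}
    [NormedAddCommGroup E] [NormedSpace ℝ E] [NormedAddCommGroup F] [NormedSpace ℝ F]
    {f : E → F} {xb u : E} {lam ρ : ℝ} (hlam : 0 ≤ lam)
    (hf : ∀ x ∈ closedBall xb ρ, DifferentiableAt ℝ f x)
    (hlip : ∀ x ∈ closedBall xb ρ, ∀ x' ∈ closedBall xb ρ,
      ‖fderiv ℝ f x - fderiv ℝ f x'‖ ≤ lam * ‖x - x'‖)
    (hu : u ∈ closedBall xb ρ) :
    LipschitzOnWith (2 * lam * ρ).toNNReal (fun v => f u + fderiv ℝ f u (v - u) - f v)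
      (closedBall xb ρ) := by
  refine lipschitzOnWith_affine_sub_of_norm_fderiv_sub_le (convex_closedBall xb ρ) hf
    fun v hv => (hlip v hv u hu).trans ?_
  rw [← dist_eq_norm]
  refine le_trans ?_ (Real.le_coe_toNNReal _)
  nlinarith [dist_triangle_right v u xb, mem_closedBall.1 hv, mem_closedBall.1 hu]

theorem isClosed_setOf_mem_add_image {X Y : Type*} [TopologicalSpace X] [AddGroup Y]
    [TopologicalSpace Y] [IsTopologicalAddGroup Y] {F : X → Set Y}
    (hF : IsClosed {p : X × Y | p.2 ∈ F p.1}) {f : X → Y} {K : Set X} (hK : IsClosed K)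
    (hf : ContinuousOn f K) :
    IsClosed {p : X × Y | p.1 ∈ K ∧ p.2 ∈ (f p.1 + ·) '' F p.1} := by
  have h := (continuousOn_fst.prodMk ((hf.comp continuousOn_fst fun _ hp => hp).neg.add
    continuousOn_snd)).preimage_isClosed_of_isClosed (hK.preimage continuous_fst) hF
  convert h using 1
  ext p
  simp only [image_add_left, mem_preimage, mem_setOf_eq, Pi.add_apply, Pi.neg_apply,
    Function.comp_apply]
  rfl

theorem uniform_regularity_of_partial_linearizations_general
    {X Y : Type*} [NormedAddCommGroup X] [NormedSpace ℝ X] [CompleteSpace X]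
    [NormedAddCommGroup Y] [NormedSpace ℝ Y]
    (F : X → Set Y) (hcl : IsClosed {p : X × Y | p.2 ∈ F p.1})
    (f : X → Y) (xb : X)
    (hdiff : ∃ ε : ℝ, 0 < ε ∧ (∀ x ∈ ball xb ε, DifferentiableAt ℝ f x) ∧
      ContinuousOn (fderiv ℝ f) (ball xb ε))
    (hlip : ∃ lam δ₁ : ℝ, 0 < lam ∧ 0 < δ₁ ∧ ∀ x ∈ ball xb δ₁, ∀ x' ∈ ball xb δ₁,
      ‖fderiv ℝ f x - fderiv ℝ f x'‖ ≤ lam * ‖x - x'‖)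
    (hsol : -(f xb) ∈ F xb)
    (hreg : MetReg (fun x => (fun z => f x + z) '' F x) xb 0) :
    ∃ τ : ℝ, 0 < τ ∧ ∃ δ' : ℝ, 0 < δ' ∧
      ∀ u ∈ ball xb δ', ∀ x ∈ ball xb δ',
        ENNReal.ofReal τ *
            infEdist x (SVInv (fun v => (fun w => f u + fderiv ℝ f u (v - u) + w) '' F v) 0) ≤
          infEdist 0 ((fun w => f u + fderiv ℝ f u (x - u) + w) '' F x) := by
  obtain ⟨ε, hε, hdiff, -⟩ := hdiff
  obtain ⟨lam, δ₁, hlam, hδ₁, hlip⟩ := hlip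
  obtain ⟨τ, hτ, δ, hδ, hreg⟩ := hreg
  obtain ⟨ρ, hρ, hρε, hρδ₁, hρδ, hlamρ, hτρ⟩ := Eventually.exists_gt (a := (0 : ℝ)) <|
    (eventually_lt_nhds hε).and <| (eventually_lt_nhds hδ₁).and <| (eventually_lt_nhds hδ).and <|
      (((continuous_const_mul (8 * lam)).tendsto' 0 0 (mul_zero _)).eventually_lt_const hτ).and
        (((continuous_const_mul τ).tendsto' 0 0 (mul_zero _)).eventually_lt_const hδ)
  refine ⟨τ / 8, by positivity, ρ / 2, by positivity, fun u hu x hx => ?_⟩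
  have huK : u ∈ closedBall xb ρ := ball_subset_closedBall (ball_subset_ball (by linarith) hu)
  set g : X → Y := fun v => f u + fderiv ℝ f u (v - u) - f v
  have hdiffK (v : X) (hv : v ∈ closedBall xb ρ) := hdiff v (closedBall_subset_ball hρε hv)
  have hg : LipschitzOnWith (2 * lam * ρ).toNNReal g (closedBall xb ρ) :=
    lipschitzOnWith_sub_linearization hlam.le hdiffK (fun v hv v' hv' =>
      hlip v (closedBall_subset_ball hρδ₁ hv) v' (closedBall_subset_ball hρδ₁ hv')) huK
  have hΦ (v : X) : (fun w => f u + fderiv ℝ f u (v - u) + w) '' F v =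
      (g v + ·) '' ((f v + ·) '' F v) := by
    rw [image_image]; congr 1; funext w; simp only [g]; abel
  simp only [hΦ]
  exact ofReal_mul_infEDist_svInv_le_of_lipschitzOnWith_of_eq_zero hτ hreg hρδ hτρ
    (isClosed_setOf_mem_add_image hcl isClosed_closedBall fun v hv =>
      (hdiffK v hv).continuousAt.continuousWithinAt)
    hg (by rw [Real.coe_toNNReal _ (by positivity)]; linarith) hu (by simp [g])
    ⟨-(f xb), hsol, add_neg_cancel _⟩ x hx

theorem uniform_regularity_of_partial_linearizations
    {X Y : Type*} [NormedAddCommGroup X] [NormedSpace ℝ X] [CompleteSpace X]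
    [NormedAddCommGroup Y] [NormedSpace ℝ Y] [CompleteSpace Y]
    (F : X → Set Y) (hcl : IsClosed {p : X × Y | p.2 ∈ F p.1})
    (f : X → Y) (xb : X)
    (hdiff : ∃ ε : ℝ, 0 < ε ∧ (∀ x ∈ ball xb ε, DifferentiableAt ℝ f x) ∧
      ContinuousOn (fderiv ℝ f) (ball xb ε))
    (hlip : ∃ lam δ₁ : ℝ, 0 < lam ∧ 0 < δ₁ ∧ ∀ x ∈ ball xb δ₁, ∀ x' ∈ ball xb δ₁,
      ‖fderiv ℝ f x - fderiv ℝ f x'‖ ≤ lam * ‖x - x'‖)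
    (hsol : -(f xb) ∈ F xb)
    (hreg : MetReg (fun x => (fun z => f x + z) '' F x) xb 0) :
    ∃ τ : ℝ, 0 < τ ∧ ∃ δ' : ℝ, 0 < δ' ∧
      ∀ u ∈ ball xb δ', ∀ x ∈ ball xb δ',
        ENNReal.ofReal τ *
            infEdist x (SVInv (fun v => (fun w => f u + fderiv ℝ f u (v - u) + w) '' F v) 0) ≤
          infEdist 0 ((fun w => f u + fderiv ℝ f u (x - u) + w) '' F x) :=
  uniform_regularity_of_partial_linearizations_general F hcl f xb hdiff hlip hsol hreg

end
end

section
/- (Key estimate in the proof of the Hölder Lyusternik–Graves theorem) Let X be a complete metric space, Y a linear space with shift-invariant metric, F : X ⇒ Y, (x̄,ȳ) ∈ gph F, f : X → Y with f(x̄) = 0, q ∈ (0,1], and τ > μ ≥ 0, γ > (τ−μ)⁻¹. Assume there exists δ > 0 such that: (a) τ·d(x,F⁻¹(y)) ≤ d(y,F(x))^q for all x ∈ B_δ(x̄), y ∈ B_δ(ȳ); (b) gph F ∩ [B̄_δ(x̄) × B̄_δ(ȳ)] is closed; (c) d(f(x),f(x'))^q ≤ μ·d(x,x') for all x, x' ∈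 B̄_δ(x̄). Then there exists δ̂ > 0 such that d(x, (F+f)⁻¹(y)) ≤ γ·d(y, F(x)+f(x))^q for all x ∈ B_{δ̂}(x̄) and y ∈ B_{δ̂}(ȳ). In particular, F + f is metrically regular of order q at (x̄,ȳ) with constant γ⁻¹. -/
open Metric EMetric ENNReal Set

noncomputable section

/-!
Fix `y` and call `φ z = d(y - f z, F z) ^ q` the defect of `z`; pick `c > τ⁻¹` with
`c / (1 - c μ) < γ`. Metric regularity moves `z` to some `z'` with `y - f z ∈ F z'` and
`d(z, z') ≤ c φ z`, and the Hölder bound on `f` gives `φ z' ≤ μ d(z, z') ≤ c μ φ z`. Iterating from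
`x`, the steps shrink geometrically with ratio `c μ < 1`, so the iterates converge in the complete
space `X`; by continuity of `f` and local closedness of the graph of `F` the limit `z` solves
`y ∈ F z + f z`, and `d(x, z) ≤ c / (1 - c μ) · φ x`. All iterates stay in the `δ`-balls when
`φ x` is small. When `φ x` is large, iterate from `x̄` instead, whose defect is at most
`d(y, ȳ) ^ q`, and conclude by the triangle inequality.
-/

open Filter Topology
open scoped NNReal

theorem mem_of_mem_closure_of_isClosed_inter {α : Type*} [TopologicalSpace α] {s t u : Set α}
    {a : α} (hst : IsClosed (s ∩ t)) (hu : IsOpen u) (hut : u ⊆ t) (hau : a ∈ u)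
    (has : a ∈ closure s) : a ∈ s :=
  (closure_minimal (fun _ h => ⟨h.2, hut h.1⟩ : u ∩ s ⊆ s ∩ t) hst (hu.inter_closure ⟨hau, has⟩)).1

theorem holderOnWith_of_rpow_edist_le {X Y : Type*} [PseudoEMetricSpace X]
    [PseudoEMetricSpace Y] {f : X → Y} {s : Set X} {q : ℝ} (hq : 0 < q) {m : ℝ≥0}
    (h : ∀ x ∈ s, ∀ x' ∈ s, edist (f x) (f x') ^ q ≤ m * edist x x') :
    HolderOnWith (m ^ q⁻¹) (Real.toNNReal q⁻¹) f s := by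
  intro x hx x' hx'
  have hq' : 0 ≤ q⁻¹ := inv_nonneg.2 hq.le
  rw [Real.coe_toNNReal _ hq', ENNReal.coe_rpow_of_nonneg _ hq',
    ← ENNReal.mul_rpow_of_nonneg _ _ hq', ← ENNReal.rpow_rpow_inv hq.ne' (edist (f x) (f x'))]
  exact ENNReal.rpow_le_rpow (h x hx x' hx') hq'

theorem continuousOn_of_rpow_edist_le {X Y : Type*} [PseudoEMetricSpace X]
    [PseudoEMetricSpace Y] {f : X → Y} {s : Set X} {q μ : ℝ} (hq : 0 < q)
    (h : ∀ x ∈ s, ∀ x' ∈ s, edist (f x) (f x') ^ q ≤ ENNReal.ofReal μ * edist x x') :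
    ContinuousOn f s :=
  (holderOnWith_of_rpow_edist_le (m := μ.toNNReal) hq h).continuousOn
    (Real.toNNReal_pos.2 (inv_pos.2 hq))

theorem sum_range_mul_pow_le_div_one_sub (a r : ℝ≥0∞) (n : ℕ) :
    ∑ k ∈ Finset.range n, a * r ^ k ≤ a / (1 - r) :=
  calc _ ≤ ∑' k, a * r ^ k := ENNReal.sum_le_tsum _
    _ = a / (1 - r) := by rw [ENNReal.tsum_mul_left, ENNReal.tsum_geometric, ← div_eq_mul_inv]

section ContractingSteps

variable {X : Type*} [PseudoEMetricSpace X] {φ : X → ℝ≥0∞} {x : X} {c θ : ℝ≥0∞}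

theorem edist_iterate_le_sum_and_le_pow_mul {g : X → X} (hθ : θ < 1) (hφx : φ x ≠ ⊤)
    (hd : ∀ z, edist x z ≤ c * φ x / (1 - θ) → φ z ≠ ⊤ → edist z (g z) ≤ c * φ z)
    (hφ : ∀ z, edist x z ≤ c * φ x / (1 - θ) → φ z ≠ ⊤ → edist x (g z) ≤ c * φ x / (1 - θ) →
      φ (g z) ≤ θ * φ z) (n : ℕ) :
    edist x (g^[n] x) ≤ ∑ k ∈ Finset.range n, c * φ x * θ ^ k ∧ φ (g^[n] x) ≤ θ ^ n * φ x := by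
  induction n with
  | zero => simp
  | succ n ih =>
    have hin := ih.1.trans (sum_range_mul_pow_le_div_one_sub _ _ n)
    have hfin : φ (g^[n] x) ≠ ⊤ :=
      ne_top_of_le_ne_top (mul_ne_top (pow_ne_top hθ.ne_top) hφx) ih.2
    have hdist : edist x (g^[n + 1] x) ≤ ∑ k ∈ Finset.range (n + 1), c * φ x * θ ^ k := by
      rw [Finset.sum_range_succ, Function.iterate_succ_apply', mul_assoc, mul_comm (φ x)]
      exact (edist_triangle _ _ _).trans
        (add_le_add ih.1 ((hd _ hin hfin).trans (mul_le_mul_right ih.2 c)))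
    refine ⟨hdist, ?_⟩
    rw [Function.iterate_succ_apply'] at hdist ⊢
    rw [pow_succ', mul_assoc]
    exact (hφ _ hin hfin (hdist.trans (sum_range_mul_pow_le_div_one_sub _ _ _))).trans
      (mul_le_mul_right ih.2 θ)

-- The decay `φ z' ≤ θ * φ z` is only asked for steps that stay in the ball, the region where
-- such an estimate is typically available.
theorem exists_tendsto_of_contracting_steps [CompleteSpace X] {R : X → X → Prop} (hc : c ≠ ⊤)
    (hθ : θ < 1) (hφx : φ x ≠ ⊤)
    (hstep : ∀ z, edist x z ≤ c * φ x / (1 - θ) → φ z ≠ ⊤ →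
      ∃ z', R z z' ∧ edist z z' ≤ c * φ z ∧ (edist x z' ≤ c * φ x / (1 - θ) → φ z' ≤ θ * φ z)) :
    ∃ u : ℕ → X, ∃ z, (∀ n, edist x (u n) ≤ c * φ x / (1 - θ)) ∧ (∀ n, R (u n) (u (n + 1))) ∧
      Tendsto u atTop (𝓝 z) ∧ edist x z ≤ c * φ x / (1 - θ) := by
  choose! g hgR hgd hgφ using hstep
  have hinv := edist_iterate_le_sum_and_le_pow_mul hθ hφx hgd hgφ
  have hin : ∀ n, edist x (g^[n] x) ≤ c * φ x / (1 - θ) := fun n =>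
    (hinv n).1.trans (sum_range_mul_pow_le_div_one_sub _ _ n)
  have hfin : ∀ n, φ (g^[n] x) ≠ ⊤ := fun n =>
    ne_top_of_le_ne_top (mul_ne_top (pow_ne_top hθ.ne_top) hφx) (hinv n).2
  have hgeom : ∀ n, edist (g^[n] x) (g^[n + 1] x) ≤ c * φ x * θ ^ n := fun n => by
    rw [Function.iterate_succ_apply', mul_assoc, mul_comm (φ x)]
    exact (hgd _ (hin n) (hfin n)).trans (mul_le_mul_right (hinv n).2 c)
  obtain ⟨z, hz⟩ := cauchySeq_tendsto_of_complete
    (cauchySeq_of_edist_le_geometric θ (c * φ x) hθ (mul_ne_top hc hφx) hgeom)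
  refine ⟨(g^[·] x), z, hin, fun n => ?_, hz,
    edist_le_of_edist_le_geometric_of_tendsto₀ θ _ hgeom hz⟩
  show R (g^[n] x) (g^[n + 1] x)
  rw [Function.iterate_succ_apply']
  exact hgR _ (hin n) (hfin n)

end ContractingSteps

theorem exists_mem_svInv_edist_le_of_regular {X Y : Type*} [PseudoEMetricSpace X]
    [PseudoEMetricSpace Y] {F : X → Set Y} {z : X} {w : Y} {q : ℝ} {κ c : ℝ≥0∞} (hq : 0 < q)
    (hκc : κ⁻¹ < c) (hreg : κ * infEDist z (SVInv F w) ≤ infEDist w (F z) ^ q)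
    (hcl : (z, w) ∈ closure {p : X × Y | p.2 ∈ F p.1} → w ∈ F z)
    (hfin : infEDist w (F z) ^ q ≠ ⊤) :
    ∃ z', w ∈ F z' ∧ edist z z' ≤ c * infEDist w (F z) ^ q := by
  rcases eq_or_ne (infEDist w (F z) ^ q) 0 with h0 | hpos
  · -- zero defect: `w ∈ closure (F z)`, so by local closedness of the graph `z` itself works
    have hw : w ∈ closure (F z) := by
      rw [mem_closure_iff_infEDist_zero]
      simpa [ENNReal.rpow_eq_zero_iff, hq, hq.not_gt] using h0
    exact ⟨z, hcl (map_mem_closure (Continuous.prodMk_right z) hw fun _ h => h), by simp⟩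
  · -- `κ⁻¹ < c` leaves room to pick an almost nearest point of `SVInv F w`
    have hκ : κ ≠ 0 := by rintro rfl; simp at hκc
    have hlt : infEDist z (SVInv F w) < c * infEDist w (F z) ^ q :=
      calc infEDist z (SVInv F w) ≤ infEDist w (F z) ^ q / κ :=
            (ENNReal.le_div_iff_mul_le (.inl hκ) (.inr hfin)).2 (by rwa [mul_comm])
        _ = κ⁻¹ * infEDist w (F z) ^ q := by rw [div_eq_mul_inv, mul_comm]
        _ < c * infEDist w (F z) ^ q := ENNReal.mul_lt_mul_left hpos hfin hκc
    obtain ⟨z', hz', hzz'⟩ := infEDist_lt_iff.1 hlt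
    exact ⟨z', hz', hzz'.le⟩

theorem svInv_add_image {X Y : Type*} [AddGroup Y] (F : X → Set Y) (f : X → Y) (y : Y) :
    SVInv (fun v => (fun z => z + f v) '' F v) y = {z | y - f z ∈ F z} := by
  ext z
  simp [SVInv, sub_eq_add_neg]

theorem isIsometricVAdd_of_dist_add_right {Y : Type*} [AddCommMagma Y] [PseudoMetricSpace Y]
    (h : ∀ a b c : Y, dist (a + c) (b + c) = dist a b) : IsIsometricVAdd Y Y :=
  ⟨fun c => Isometry.of_dist_eq fun a b => by simpa only [vadd_eq_add, add_comm c] using h a b c⟩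

theorem infEDist_add_image {Y : Type*} [AddGroup Y] [PseudoEMetricSpace Y]
    [IsIsometricVAdd Yᵃᵒᵖ Y] (y a : Y) (s : Set Y) :
    infEDist y ((fun z => z + a) '' s) = infEDist (y - a) s := by
  simpa using infEDist_image (x := y - a) (t := s) (isometry_add_right a)

theorem exists_pos_forall_mem_ball_sub_mem_ball {X Y : Type*} [PseudoMetricSpace X]
    [AddCommGroup Y] [PseudoMetricSpace Y] [IsIsometricVAdd Y Y] {f : X → Y} {xb : X} {yb : Y}
    {δ : ℝ} (hf : ContinuousAt f xb) (hf0 : f xb = 0) (hδ : 0 < δ) :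
    ∃ ε > (0 : ℝ), ∀ z ∈ ball xb ε, ∀ y ∈ ball yb ε, z ∈ ball xb δ ∧ y - f z ∈ ball yb δ := by
  obtain ⟨r, hr, hfr⟩ := Metric.continuousAt_iff.1 hf (δ / 2) (half_pos hδ)
  refine ⟨min r (δ / 2), lt_min hr (half_pos hδ), fun z hz y hy => ?_⟩
  rw [Metric.mem_ball, lt_min_iff] at hz hy
  refine ⟨Metric.mem_ball.2 (by linarith), ?_⟩
  calc dist (y - f z) yb ≤ dist (y - f z) (y - f xb) + dist (y - f xb) yb := dist_triangle _ _ _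
    _ = dist (f z) (f xb) + dist y yb := by rw [dist_sub_left, hf0, sub_zero]
    _ < δ / 2 + δ / 2 := add_lt_add (hfr hz.1) hy.2
    _ = δ := add_halves δ

section ShiftInvariant

variable {Y : Type*} [AddCommGroup Y] [PseudoEMetricSpace Y] [IsIsometricVAdd Y Y]

theorem rpow_infEDist_sub_le_rpow_edist {X : Type*} {F : X → Set Y} {f : X → Y} {y : Y}
    {z z' : X} {q : ℝ} (hq : 0 ≤ q) (h : y - f z ∈ F z') :
    infEDist (y - f z') (F z') ^ q ≤ edist (f z') (f z) ^ q := by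
  rw [← edist_sub_left y]
  exact ENNReal.rpow_le_rpow (infEDist_le_edist_of_mem h) hq

theorem mem_closure_graph_of_tendsto {X : Type*} [TopologicalSpace X] {F : X → Set Y}
    {f : X → Y} {u : ℕ → X} {z : X} {y : Y} (hu : Tendsto u atTop (𝓝 z))
    (hfu : Tendsto (f ∘ u) atTop (𝓝 (f z))) (hR : ∀ n, y - f (u n) ∈ F (u (n + 1))) :
    (z, y - f z) ∈ closure {p : X × Y | p.2 ∈ F p.1} :=
  mem_closure_of_tendsto ((hu.comp (tendsto_add_atTop_nat 1)).prodMk_nhds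
    (((show Isometry (y - · : Y → Y) from edist_sub_left y).continuous.tendsto _).comp hfu))
    (.of_forall hR)

theorem infEDist_sub_mem_le_of_regular {X : Type*} [PseudoEMetricSpace X] [CompleteSpace X]
    {F : X → Set Y} {f : X → Y} {U : Set X} {V : Set Y}
    {x : X} {y : Y} {q τ μ c : ℝ} (hq : 0 < q) (hτ : 0 < τ) (hμ : 0 ≤ μ) (hτc : τ⁻¹ < c)
    (hcμ : c * μ < 1)
    (ha : ∀ z ∈ U, ∀ w ∈ V, ENNReal.ofReal τ * infEDist z (SVInv F w) ≤ infEDist w (F z) ^ q)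
    (hb : ∀ z ∈ U, ∀ w ∈ V, (z, w) ∈ closure {p : X × Y | p.2 ∈ F p.1} → w ∈ F z)
    (hc : ∀ z ∈ U, ∀ z' ∈ U, edist (f z) (f z') ^ q ≤ ENNReal.ofReal μ * edist z z')
    (hx : infEDist (y - f x) (F x) ^ q ≠ ⊤)
    (hUV : ∀ z, edist x z ≤ ENNReal.ofReal (c / (1 - c * μ)) * infEDist (y - f x) (F x) ^ q →
      z ∈ U ∧ y - f z ∈ V) :
    infEDist x {z | y - f z ∈ F z} ≤
      ENNReal.ofReal (c / (1 - c * μ)) * infEDist (y - f x) (F x) ^ q := by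
  set φ : X → ℝ≥0∞ := fun z => infEDist (y - f z) (F z) ^ q
  have hc0 : 0 < c := (inv_pos.2 hτ).trans hτc
  have hρ : ENNReal.ofReal c * φ x / (1 - ENNReal.ofReal (c * μ)) =
      ENNReal.ofReal (c / (1 - c * μ)) * φ x := by
    rw [← ENNReal.ofReal_one, ← ENNReal.ofReal_sub _ (by positivity),
      ENNReal.ofReal_div_of_pos (by linarith), ENNReal.mul_div_right_comm]
  have hκc : (ENNReal.ofReal τ)⁻¹ < ENNReal.ofReal c := by
    rw [← ENNReal.ofReal_inv_of_pos hτ]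
    exact (ENNReal.ofReal_lt_ofReal_iff hc0).2 hτc
  obtain ⟨u, z, hu, hR, hlim, hz⟩ := exists_tendsto_of_contracting_steps (φ := φ)
    (R := fun z z' => y - f z ∈ F z') ENNReal.ofReal_ne_top (ENNReal.ofReal_lt_one.2 hcμ) hx (by
      rw [hρ]
      intro z hz hfin
      obtain ⟨hzU, hzV⟩ := hUV z hz
      obtain ⟨z', hz'F, hzz'⟩ :=
        exists_mem_svInv_edist_le_of_regular hq hκc (ha z hzU _ hzV) (hb z hzU _ hzV) hfin
      refine ⟨z', hz'F, hzz', fun hz' => ?_⟩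
      calc φ z' ≤ edist (f z') (f z) ^ q := rpow_infEDist_sub_le_rpow_edist hq.le hz'F
        _ ≤ ENNReal.ofReal μ * edist z' z := hc z' (hUV z' hz').1 z hzU
        _ ≤ ENNReal.ofReal μ * (ENNReal.ofReal c * φ z) := by
            rw [edist_comm]; exact mul_le_mul_right hzz' _
        _ = ENNReal.ofReal (c * μ) * φ z := by rw [ENNReal.ofReal_mul hc0.le]; ring)
  rw [hρ] at hu hz
  obtain ⟨hzU, hzV⟩ := hUV z hz
  have hfu : Tendsto (f ∘ u) atTop (𝓝 (f z)) :=
    (continuousOn_of_rpow_edist_le hq hc z hzU).tendsto.comp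
      (tendsto_nhdsWithin_iff.2 ⟨hlim, .of_forall fun n => (hUV _ (hu n)).1⟩)
  have hzS : z ∈ {z | y - f z ∈ F z} := hb z hzU _ hzV (mem_closure_graph_of_tendsto hlim hfu hR)
  exact (infEDist_le_edist_of_mem hzS).trans hz

end ShiftInvariant

theorem infEDist_le_of_estimate_on_ball {X : Type*} [PseudoMetricSpace X] {S : Set X}
    {φ : X → ℝ≥0∞} {x xb : X} {k s t ε : ℝ} (hk : 0 < k) (hs : 0 ≤ s)
    (hS : ∀ x₀, φ x₀ ≠ ⊤ → (∀ z, edist x₀ z ≤ ENNReal.ofReal k * φ x₀ → z ∈ ball xb ε) →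
      infEDist x₀ S ≤ ENNReal.ofReal k * φ x₀)
    (hx : dist x xb < t) (hxb : φ xb ≤ ENNReal.ofReal s) (hε : 2 * t + k * s < ε) :
    infEDist x S ≤ ENNReal.ofReal k * φ x := by
  have ht : 0 < t := dist_nonneg.trans_lt hx
  rcases le_or_gt (ENNReal.ofReal k * φ x) (ENNReal.ofReal (t + k * s)) with hnear | hfar
  · refine hS x (fun htop => ?_) fun z hz => ?_
    · rw [htop, ENNReal.mul_top (ENNReal.ofReal_pos.2 hk).ne'] at hnear
      exact ENNReal.ofReal_ne_top (top_le_iff.1 hnear)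
    · have : dist x z ≤ t + k * s := (edist_le_ofReal (by positivity)).1 (hz.trans hnear)
      rw [Metric.mem_ball]
      linarith [dist_triangle_left z xb x]
  · -- start the estimate from `xb` instead, whose defect is at most `s`
    have hks : ENNReal.ofReal k * φ xb ≤ ENNReal.ofReal (k * s) := by
      rw [ENNReal.ofReal_mul hk.le]
      exact mul_le_mul_right hxb _
    have hbase := hS xb (ne_top_of_le_ne_top ENNReal.ofReal_ne_top hxb) fun z hz => by
      have : dist xb z ≤ k * s := (edist_le_ofReal (by positivity)).1 (hz.trans hks)
      rw [Metric.mem_ball, dist_comm]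
      linarith
    calc infEDist x S ≤ infEDist xb S + edist x xb := infEDist_le_infEDist_add_edist
      _ ≤ ENNReal.ofReal (k * s) + ENNReal.ofReal t :=
          add_le_add (hbase.trans hks) (edist_lt_ofReal.2 hx).le
      _ = ENNReal.ofReal (t + k * s) := by
          rw [← ENNReal.ofReal_add (by positivity) ht.le, add_comm]
      _ ≤ ENNReal.ofReal k * φ x := hfar.le

theorem exists_inv_lt_and_div_one_sub_mul_lt {τ μ γ : ℝ} (hμ : 0 ≤ μ) (hτμ : μ < τ)
    (hγ : (τ - μ)⁻¹ < γ) : ∃ c, τ⁻¹ < c ∧ c * μ < 1 ∧ c / (1 - c * μ) < γ := by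
  have hτ : 0 < τ := hμ.trans_lt hτμ
  have hτμ' : τ⁻¹ * μ < 1 := by rw [inv_mul_lt_iff₀ hτ]; linarith
  have hlim : τ⁻¹ / (1 - τ⁻¹ * μ) = (τ - μ)⁻¹ := by field_simp
  have hcont : ContinuousAt (fun c => c / (1 - c * μ)) τ⁻¹ :=
    continuousAt_id.div (by fun_prop) (by linarith)
  have hev : ∀ᶠ c in 𝓝 τ⁻¹, c * μ < 1 ∧ c / (1 - c * μ) < γ :=
    ((continuousAt_id.mul_const μ).eventually (gt_mem_nhds hτμ')).and
      (hcont.eventually (gt_mem_nhds (show τ⁻¹ / (1 - τ⁻¹ * μ) < γ by rwa [hlim])))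
  obtain ⟨c, hc, hcτ⟩ := ((hev.filter_mono nhdsWithin_le_nhds).and
    (self_mem_nhdsWithin : ∀ᶠ c in 𝓝[>] τ⁻¹, τ⁻¹ < c)).exists
  exact ⟨c, hcτ, hc⟩

theorem exists_mem_Ioo_two_mul_add_mul_rpow_lt {q k ε : ℝ} (hq : 0 < q) (hε : 0 < ε) :
    ∃ t ∈ Ioo 0 ε, 2 * t + k * t ^ q < ε := by
  have hcont : Continuous fun t : ℝ => 2 * t + k * t ^ q :=
    (continuous_const.mul continuous_id).add
      (continuous_const.mul (Real.continuous_rpow_const hq.le))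
  have h : Tendsto (fun t : ℝ => 2 * t + k * t ^ q) (𝓝[>] 0) (𝓝 0) := by
    simpa [Real.zero_rpow hq.ne'] using (hcont.tendsto 0).mono_left nhdsWithin_le_nhds
  obtain ⟨t, htε, ht⟩ := ((h.eventually (gt_mem_nhds hε)).and (Ioo_mem_nhdsGT hε)).exists
  exact ⟨t, ht, htε⟩

theorem key_estimate_holder_lyusternik_graves_general
    {X Y : Type*} [MetricSpace X] [CompleteSpace X]
    [AddCommGroup Y] [MetricSpace Y]
    (hshift : ∀ a b c : Y, dist (a + c) (b + c) = dist a b)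
    (F : X → Set Y) (xb : X) (yb : Y) (hxy : yb ∈ F xb)
    (f : X → Y) (hf0 : f xb = 0) (q : ℝ) (hq0 : 0 < q)
    (τ μ γ : ℝ) (hμ : 0 ≤ μ) (hτμ : μ < τ) (hγ : (τ - μ)⁻¹ < γ)
    (δ : ℝ) (hδ : 0 < δ)
    (ha : ∀ x ∈ ball xb δ, ∀ y ∈ ball yb δ,
      ENNReal.ofReal τ * infEdist x (SVInv F y) ≤ infEdist y (F x) ^ q)
    (hb : IsClosed ({p : X × Y | p.2 ∈ F p.1} ∩ (closedBall xb δ ×ˢ closedBall yb δ)))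
    (hc : ∀ x ∈ closedBall xb δ, ∀ x' ∈ closedBall xb δ,
      edist (f x) (f x') ^ q ≤ ENNReal.ofReal μ * edist x x') :
    ∃ δh : ℝ, 0 < δh ∧ ∀ x ∈ ball xb δh, ∀ y ∈ ball yb δh,
      infEdist x (SVInv (fun v => (fun z => z + f v) '' F v) y) ≤
        ENNReal.ofReal γ * infEdist y ((fun z => z + f x) '' F x) ^ q := by
  have : IsIsometricVAdd Y Y := isIsometricVAdd_of_dist_add_right hshift
  have hτ : 0 < τ := hμ.trans_lt hτμ
  obtain ⟨c, hτc, hcμ, hcγ⟩ := exists_inv_lt_and_div_one_sub_mul_lt hμ hτμ hγ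
  have hk : 0 < c / (1 - c * μ) := div_pos ((inv_pos.2 hτ).trans hτc) (by linarith)
  obtain ⟨ε, hε, hregion⟩ := exists_pos_forall_mem_ball_sub_mem_ball
    ((continuousOn_of_rpow_edist_le hq0 hc).continuousAt (closedBall_mem_nhds xb hδ)) hf0 hδ
  obtain ⟨t, ⟨ht, htε⟩, hεt⟩ := exists_mem_Ioo_two_mul_add_mul_rpow_lt (k := c / (1 - c * μ)) hq0 hε
  have hgraph : ∀ z ∈ ball xb δ, ∀ w ∈ ball yb δ,
      (z, w) ∈ closure {p : X × Y | p.2 ∈ F p.1} → w ∈ F z := fun z hz w hw =>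
    mem_of_mem_closure_of_isClosed_inter hb (Metric.isOpen_ball.prod Metric.isOpen_ball)
      (prod_mono ball_subset_closedBall ball_subset_closedBall) ⟨hz, hw⟩
  refine ⟨t, ht, fun x hx y hy => ?_⟩
  -- restate the goal through `infEDist`, of which the statement's `infEdist` is an alias
  show infEDist x _ ≤ ENNReal.ofReal γ * infEDist y _ ^ q
  rw [svInv_add_image, infEDist_add_image]
  refine (infEDist_le_of_estimate_on_ball (φ := fun z => infEDist (y - f z) (F z) ^ q) hk
    (Real.rpow_nonneg ht.le q) (fun x₀ hx₀ hball => ?_) hx ?_ hεt).trans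
    (mul_le_mul_left (ENNReal.ofReal_le_ofReal hcγ.le) _)
  · exact infEDist_sub_mem_le_of_regular hq0 hτ hμ hτc hcμ ha hgraph
      (fun z hz z' hz' => hc z (ball_subset_closedBall hz) z' (ball_subset_closedBall hz')) hx₀
      fun z hz => hregion z (hball z hz) y (Metric.ball_subset_ball htε.le hy)
  · rw [hf0, sub_zero, ← ENNReal.ofReal_rpow_of_nonneg ht.le hq0.le]
    exact ENNReal.rpow_le_rpow ((infEDist_le_edist_of_mem hxy).trans (edist_lt_ofReal.2 hy).le)
      hq0.le

theorem key_estimate_holder_lyusternik_graves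
    {X Y : Type*} [MetricSpace X] [CompleteSpace X]
    [AddCommGroup Y] [MetricSpace Y]
    (hshift : ∀ a b c : Y, dist (a + c) (b + c) = dist a b)
    (F : X → Set Y) (xb : X) (yb : Y) (hxy : yb ∈ F xb)
    (f : X → Y) (hf0 : f xb = 0) (q : ℝ) (hq0 : 0 < q) (hq1 : q ≤ 1)
    (τ μ γ : ℝ) (hμ : 0 ≤ μ) (hτμ : μ < τ) (hγ : (τ - μ)⁻¹ < γ)
    (δ : ℝ) (hδ : 0 < δ)
    (ha : ∀ x ∈ ball xb δ, ∀ y ∈ ball yb δ,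
      ENNReal.ofReal τ * infEdist x (SVInv F y) ≤ infEdist y (F x) ^ q)
    (hb : IsClosed ({p : X × Y | p.2 ∈ F p.1} ∩ (closedBall xb δ ×ˢ closedBall yb δ)))
    (hc : ∀ x ∈ closedBall xb δ, ∀ x' ∈ closedBall xb δ,
      edist (f x) (f x') ^ q ≤ ENNReal.ofReal μ * edist x x') :
    ∃ δh : ℝ, 0 < δh ∧ ∀ x ∈ ball xb δh, ∀ y ∈ ball yb δh,
      infEdist x (SVInv (fun v => (fun z => z + f v) '' F v) y) ≤
        ENNReal.ofReal γ * infEdist y ((fun z => z + f x) '' F x) ^ q :=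
  key_estimate_holder_lyusternik_graves_general hshift F xb yb hxy f hf0 q hq0 τ μ γ hμ hτμ hγ δ hδ
    ha hb hc

end
end
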